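/- arXiv:1710.05481 — 6 statements merged into one kernel-verified Lean document; each statement's English description precedes it below -/
import Mathlib

section
/- There is an absolute constant c > 0 such that for every field F, every integer d ≥ 2, and every integer Δ with 1 ≤ Δ ≤ log₂ d, there exists a syntactically multilinear arithmetic formula over F of product-depth at most Δ and size at most 2^{c·Δ·d^{1/Δ}} computing the polynomial IMM_d. -/
open MvPolynomial

/-- The variable set `X = {x^(i)_{u,v}}`: index `i ∈ Fin d`, entries `u,v ∈ Fin 2`
(value `0` of `Fin 2` represents `1`, value `1` represents `2`). -/
abbrev IMMVar (d : ℕ) : Type := Fin d × Fin 2 × Fin 2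

/-- The matrix `M^(i)` of variables. -/
noncomputable def IMMMat (F : Type) [CommSemiring F] (d : ℕ) (i : Fin d) :
    Matrix (Fin 2) (Fin 2) (MvPolynomial (IMMVar d) F) :=
  Matrix.of fun u v => X (i, u, v)

/-- The iterated matrix multiplication polynomial `IMM_d = M(1,1) + M(1,2)`,
where `M = M^(1) ⋯ M^(d)`. -/
noncomputable def IMMPoly (F : Type) [CommSemiring F] (d : ℕ) :
    MvPolynomial (IMMVar d) F :=
  (List.ofFn (IMMMat F d)).prod 0 0 + (List.ofFn (IMMMat F d)).prod 0 1

/-- A polynomial is multilinear if its degree in each variable is at most `1`. -/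
def IsMultilinearPoly {F V : Type} [CommSemiring F] (p : MvPolynomial V F) : Prop :=
  ∀ v, p.degreeOf v ≤ 1

/-- Arithmetic formulas over `F` in variables `V`: leaves are variables or constants,
internal gates are sums or products with a nonempty (finite) family of children. -/
inductive Formula (F : Type) (V : Type) : Type where
  | var : V → Formula F V
  | const : F → Formula F V
  | sum : {n : ℕ} → (Fin (n + 1) → Formula F V) → Formula F V
  | prod : {n : ℕ} → (Fin (n + 1) → Formula F V) → Formula F V

namespace Formula

/-- The polynomial computed by a formula. -/
noncomputable def poly {F V : Type} [CommSemiring F] : Formula F V → MvPolynomial V F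
  | .var v => X v
  | .const c => C c
  | .sum ch => ∑ i, (ch i).poly
  | .prod ch => ∏ i, (ch i).poly

/-- The size of a formula: total number of nodes, including leaves. -/
def size {F V : Type} : Formula F V → ℕ
  | .var _ => 1
  | .const _ => 1
  | .sum ch => 1 + ∑ i, (ch i).size
  | .prod ch => 1 + ∑ i, (ch i).size

/-- Product-depth: the maximum number of product gates on a root-to-leaf path. -/
def productDepth {F V : Type} : Formula F V → ℕ
  | .var _ => 0
  | .const _ => 0
  | .sum ch => Finset.univ.sup fun i => (ch i).productDepth
  | .prod ch => 1 + Finset.univ.sup fun i => (ch i).productDepth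

/-- The support of a formula: the set of variables labelling its leaves. -/
def support {F V : Type} [DecidableEq V] : Formula F V → Finset V
  | .var v => {v}
  | .const _ => ∅
  | .sum ch => Finset.univ.sup fun i => (ch i).support
  | .prod ch => Finset.univ.sup fun i => (ch i).support

/-- Syntactic multilinearity: at every product gate, the supports of distinct
children are pairwise disjoint. -/
def SynMultilinear {F V : Type} [DecidableEq V] : Formula F V → Prop
  | .var _ => True
  | .const _ => True
  | .sum ch => ∀ i, (ch i).SynMultilinear
  | .prod ch => (∀ i, (ch i).SynMultilinear) ∧
      ∀ i j, i ≠ j → Disjoint (ch i).support (ch j).support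

/-- Multilinear formula: every subformula computes a multilinear polynomial. -/
def MultilinearF {F V : Type} [CommSemiring F] : Formula F V → Prop
  | .var v => IsMultilinearPoly (poly (F := F) (.var v))
  | .const c => IsMultilinearPoly (poly (V := V) (.const c))
  | .sum ch => IsMultilinearPoly (poly (.sum ch)) ∧ ∀ i, (ch i).MultilinearF
  | .prod ch => IsMultilinearPoly (poly (.prod ch)) ∧ ∀ i, (ch i).MultilinearF

end Formula

/-!
Cut the `d` matrices into `k ≈ d^(1/Δ)` consecutive blocks. An entry of the product is the sum,
over all choices of the `k - 1` intermediate indices, of products of `k` entries of the block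
products; computing those recursively costs one product layer per level, so `Δ` levels handle
`k^Δ ≥ d` matrices. Distinct blocks use disjoint variables, which makes every product gate
syntactically multilinear, and the size obeys `s(Δ + 1) ≤ 1 + 2^k (1 + k s(Δ)) ≤ 8^k s(Δ)`,
so `s(Δ) ≤ 2^(3kΔ)`.
-/

namespace Formula

variable {F V : Type}

def sumList [Zero F] : List (Formula F V) → Formula F V
  | [] => const 0
  | φ :: l => sum (φ :: l).get

def prodList [One F] : List (Formula F V) → Formula F V
  | [] => const 1
  | φ :: l => prod (φ :: l).get

section Gates

variable [CommSemiring F] (l : List (Formula F V))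

@[simp]
lemma poly_sumList : (sumList l).poly = (l.map poly).sum := by
  cases l with
  | nil => simp [sumList, poly]
  | cons φ l => exact Fin.sum_univ_fun_getElem (φ :: l) poly

@[simp]
lemma poly_prodList : (prodList l).poly = (l.map poly).prod := by
  cases l with
  | nil => simp [prodList, poly]
  | cons φ l => exact Fin.prod_univ_fun_getElem (φ :: l) poly

lemma size_sumList : (sumList l).size = 1 + (l.map size).sum := by
  cases l with
  | nil => rfl
  | cons φ l => exact congrArg (1 + ·) (Fin.sum_univ_fun_getElem (φ :: l) size)

lemma size_prodList : (prodList l).size = 1 + (l.map size).sum := by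
  cases l with
  | nil => rfl
  | cons φ l => exact congrArg (1 + ·) (Fin.sum_univ_fun_getElem (φ :: l) size)

variable {l} {δ : ℕ}

lemma productDepth_sumList_le (h : ∀ φ ∈ l, φ.productDepth ≤ δ) :
    (sumList l).productDepth ≤ δ := by
  cases l with
  | nil => simp [sumList, productDepth]
  | cons φ l => exact Finset.sup_le fun i _ => h _ (List.get_mem _ _)

lemma productDepth_prodList_le (h : ∀ φ ∈ l, φ.productDepth ≤ δ) :
    (prodList l).productDepth ≤ δ + 1 := by
  cases l with
  | nil => simp [prodList, productDepth]
  | cons φ l =>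
    exact add_comm 1 δ ▸ Nat.add_le_add_left (Finset.sup_le fun i _ => h _ (List.get_mem _ _)) 1

variable [DecidableEq V] {x : V}

lemma mem_support_sumList : x ∈ (sumList l).support ↔ ∃ φ ∈ l, x ∈ φ.support := by
  cases l <;> simp [sumList, support, Finset.mem_sup, List.mem_iff_get]

lemma mem_support_prodList : x ∈ (prodList l).support ↔ ∃ φ ∈ l, x ∈ φ.support := by
  cases l <;> simp [prodList, support, Finset.mem_sup, List.mem_iff_get]

lemma synMultilinear_sumList (h : ∀ φ ∈ l, φ.SynMultilinear) : (sumList l).SynMultilinear := by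
  cases l with
  | nil => trivial
  | cons φ l => exact fun i => h _ (List.get_mem _ _)

lemma synMultilinear_prodList (h : ∀ φ ∈ l, φ.SynMultilinear)
    (hl : l.Pairwise fun φ ψ => Disjoint φ.support ψ.support) : (prodList l).SynMultilinear := by
  cases l with
  | nil => trivial
  | cons φ l =>
    refine ⟨fun i => h _ (List.get_mem _ _), fun i j hij => ?_⟩
    rcases lt_or_gt_of_ne hij with hlt | hlt
    · exact List.pairwise_iff_get.1 hl i j hlt
    · exact (List.pairwise_iff_get.1 hl j i hlt).symm

end Gates

variable {ι : Type} [Fintype ι] [DecidableEq ι]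

/-- The factor lists `[A₁ u w₁, A₂ w₁ w₂, …, Aₘ wₘ₋₁ v]` over all choices of the intermediate
indices `w₁, …, wₘ₋₁`. -/
noncomputable def pathMonomials :
    List (Matrix ι ι (Formula F V)) → ι → ι → List (List (Formula F V))
  | [], u, v => if u = v then [[]] else []
  | A :: As, u, v => Finset.univ.toList.flatMap fun w => (pathMonomials As w v).map (A u w :: ·)

noncomputable def matProd [CommSemiring F] (As : List (Matrix ι ι (Formula F V))) :
    Matrix ι ι (Formula F V) :=
  Matrix.of fun u v => sumList ((pathMonomials As u v).map prodList)

section PathMonomials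

variable {As : List (Matrix ι ι (Formula F V))} {pl : List (Formula F V)}

lemma mem_pathMonomials_nil {u v : ι} : pl ∈ pathMonomials [] u v ↔ u = v ∧ pl = [] := by
  by_cases h : u = v <;> simp [pathMonomials, h]

lemma mem_pathMonomials_cons {A : Matrix ι ι (Formula F V)} {u v : ι} :
    pl ∈ pathMonomials (A :: As) u v ↔
      ∃ w, ∃ pl' ∈ pathMonomials As w v, pl = A u w :: pl' := by
  simp [pathMonomials, eq_comm]

lemma sum_prod_pathMonomials [CommSemiring F] (As : List (Matrix ι ι (Formula F V))) (u v : ι) :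
    ((pathMonomials As u v).map fun pl => (pl.map poly).prod).sum
      = (As.map (·.map poly)).prod u v := by
  induction As generalizing u with
  | nil => by_cases h : u = v <;> simp [pathMonomials, h]
  | cons A As ih =>
    simp [pathMonomials, List.flatMap_def, List.sum_flatten, Function.comp_def,
      List.sum_map_mul_left, ih, Matrix.mul_apply, Finset.sum_map_toList]

lemma length_pathMonomials_le (As : List (Matrix ι ι (Formula F V))) (u v : ι) :
    (pathMonomials As u v).length ≤ Fintype.card ι ^ As.length := by
  induction As generalizing u with
  | nil => by_cases h : u = v <;> simp [pathMonomials, h]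
  | cons A As ih =>
    simp only [pathMonomials, List.length_flatMap, List.length_map, Finset.sum_map_toList,
      List.length_cons, pow_succ']
    calc ∑ w, (pathMonomials As w v).length ≤ ∑ _w : ι, Fintype.card ι ^ As.length :=
          Finset.sum_le_sum fun w _ => ih w
      _ = _ := by simp

lemma length_of_mem_pathMonomials {u v : ι} (h : pl ∈ pathMonomials As u v) :
    pl.length = As.length := by
  induction As generalizing u pl with
  | nil => simp [(mem_pathMonomials_nil.1 h).2]
  | cons A As ih =>
    obtain ⟨w, pl', hpl', rfl⟩ := mem_pathMonomials_cons.1 h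
    simp [ih hpl']

lemma exists_of_mem_pathMonomials {u v : ι} (h : pl ∈ pathMonomials As u v) {φ : Formula F V}
    (hφ : φ ∈ pl) : ∃ A ∈ As, ∃ a b, φ = A a b := by
  induction As generalizing u pl with
  | nil => simp [(mem_pathMonomials_nil.1 h).2] at hφ
  | cons A As ih =>
    obtain ⟨w, pl', hpl', rfl⟩ := mem_pathMonomials_cons.1 h
    rcases List.mem_cons.1 hφ with rfl | hφ
    · exact ⟨A, List.mem_cons_self, u, w, rfl⟩
    · obtain ⟨B, hB, a, b, rfl⟩ := ih hpl' hφ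
      exact ⟨B, List.mem_cons_of_mem _ hB, a, b, rfl⟩

lemma pairwise_disjoint_of_mem_pathMonomials [DecidableEq V] {u v : ι}
    (hAs : As.Pairwise fun A B => ∀ a b a' b', Disjoint (A a b).support (B a' b').support)
    (h : pl ∈ pathMonomials As u v) : pl.Pairwise fun φ ψ => Disjoint φ.support ψ.support := by
  induction As generalizing u pl with
  | nil => simp [(mem_pathMonomials_nil.1 h).2]
  | cons A As ih =>
    obtain ⟨w, pl', hpl', rfl⟩ := mem_pathMonomials_cons.1 h
    refine List.pairwise_cons.2 ⟨fun ψ hψ => ?_, ih (List.pairwise_cons.1 hAs).2 hpl'⟩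
    obtain ⟨B, hB, a, b, rfl⟩ := exists_of_mem_pathMonomials hpl' hψ
    exact (List.pairwise_cons.1 hAs).1 B hB u w a b

end PathMonomials

section MatProd

variable [CommSemiring F]

lemma map_poly_matProd (As : List (Matrix ι ι (Formula F V))) :
    (matProd As).map poly = (As.map (·.map poly)).prod := by
  ext u v
  simp [matProd, Function.comp_def, sum_prod_pathMonomials]

variable {As : List (Matrix ι ι (Formula F V))} {u v : ι}

lemma productDepth_matProd_le {δ : ℕ} (h : ∀ A ∈ As, ∀ a b, (A a b).productDepth ≤ δ) :
    (matProd As u v).productDepth ≤ δ + 1 := by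
  refine productDepth_sumList_le fun ψ hψ => ?_
  obtain ⟨pl, hpl, rfl⟩ := List.mem_map.1 hψ
  refine productDepth_prodList_le fun φ hφ => ?_
  obtain ⟨A, hA, a, b, rfl⟩ := exists_of_mem_pathMonomials hpl hφ
  exact h A hA a b

lemma size_matProd_le {s : ℕ} (h : ∀ A ∈ As, ∀ a b, (A a b).size ≤ s) :
    (matProd As u v).size ≤ 1 + Fintype.card ι ^ As.length * (1 + As.length * s) := by
  have hmonomial : ∀ pl ∈ pathMonomials As u v, (prodList pl).size ≤ 1 + As.length * s := by
    intro pl hpl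
    rw [size_prodList, ← length_of_mem_pathMonomials hpl, ← List.length_map (f := size),
      ← smul_eq_mul]
    refine Nat.add_le_add_left (List.sum_le_card_nsmul _ _ ?_) 1
    simp only [List.forall_mem_map]
    intro φ hφ
    obtain ⟨A, hA, a, b, rfl⟩ := exists_of_mem_pathMonomials hpl hφ
    exact h A hA a b
  rw [matProd, Matrix.of_apply, size_sumList, List.map_map]
  refine Nat.add_le_add_left ?_ 1
  calc _ ≤ ((pathMonomials As u v).map (size ∘ prodList)).length • (1 + As.length * s) :=
        List.sum_le_card_nsmul _ _ (by simpa using hmonomial)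
    _ = (pathMonomials As u v).length * (1 + As.length * s) := by simp
    _ ≤ _ := Nat.mul_le_mul_right _ (length_pathMonomials_le As u v)

variable [DecidableEq V]

lemma exists_of_mem_support_matProd {x : V} (hx : x ∈ (matProd As u v).support) :
    ∃ A ∈ As, ∃ a b, x ∈ (A a b).support := by
  obtain ⟨ψ, hψ, hxψ⟩ := mem_support_sumList.1 hx
  obtain ⟨pl, hpl, rfl⟩ := List.mem_map.1 hψ
  obtain ⟨φ, hφ, hxφ⟩ := mem_support_prodList.1 hxψ
  obtain ⟨A, hA, a, b, rfl⟩ := exists_of_mem_pathMonomials hpl hφ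
  exact ⟨A, hA, a, b, hxφ⟩

lemma synMultilinear_matProd (h : ∀ A ∈ As, ∀ a b, (A a b).SynMultilinear)
    (hAs : As.Pairwise fun A B => ∀ a b a' b', Disjoint (A a b).support (B a' b').support) :
    (matProd As u v).SynMultilinear := by
  refine synMultilinear_sumList fun ψ hψ => ?_
  obtain ⟨pl, hpl, rfl⟩ := List.mem_map.1 hψ
  refine synMultilinear_prodList (fun φ hφ => ?_) (pairwise_disjoint_of_mem_pathMonomials hAs hpl)
  obtain ⟨A, hA, a, b, rfl⟩ := exists_of_mem_pathMonomials hpl hφ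
  exact h A hA a b

end MatProd

end Formula

open Formula

lemma one_add_two_pow_mul_le {k s : ℕ} (hk : 1 ≤ k) (hs : 1 ≤ s) :
    1 + 2 ^ k * (1 + k * s) ≤ 2 ^ (3 * k) * s := by
  obtain ⟨K, hK⟩ : ∃ K, K = 2 ^ k := ⟨_, rfl⟩
  have hkK : k ≤ K := hK ▸ Nat.lt_two_pow_self.le
  have hK2 : 2 ≤ K := hK ▸ Nat.le_self_pow (by omega) 2
  rw [pow_mul', ← hK]
  calc 1 + K * (1 + k * s) = 1 + K + K * k * s := by ring
    _ ≤ s + K * s + K * K * s := by gcongr; exact Nat.le_mul_of_pos_right K hs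
    _ = (1 + K + K * K) * s := by ring
    _ ≤ K ^ 3 * s := by gcongr; nlinarith

/-- Formulas of product-depth `Δ` for the entries of `∏_{i ∈ l} M^(i)`, obtained by cutting `l`
into `k` consecutive blocks of length at most `k ^ (Δ - 1)`; correct when `l.length ≤ k ^ Δ`. -/
noncomputable def immFormula (F : Type) [CommSemiring F] {d : ℕ} (k : ℕ) :
    ℕ → List (Fin d) → Matrix (Fin 2) (Fin 2) (Formula F (IMMVar d))
  | 0, [i] => Matrix.of fun u v => .var (i, u, v)
  -- the identity, needed for the empty blocks that occur when `l` is short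
  | 0, _ => Matrix.of fun u v => .const (if u = v then 1 else 0)
  | Δ + 1, l => matProd (((List.replicate k (k ^ Δ)).splitLengths l).map (immFormula F k Δ))

section ImmFormula

variable {F : Type} [CommSemiring F] {d k : ℕ}

lemma flatten_splitLengths_replicate_pow {l : List (Fin d)} {Δ : ℕ}
    (hl : l.length ≤ k ^ (Δ + 1)) :
    ((List.replicate k (k ^ Δ)).splitLengths l).flatten = l :=
  List.flatten_splitLengths l _ (by simpa [pow_succ', List.sum_replicate] using hl)

lemma length_le_of_mem_splitLengths_replicate {l ch : List (Fin d)} {B : ℕ}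
    (hch : ch ∈ (List.replicate k B).splitLengths l) : ch.length ≤ B :=
  List.length_mem_splitLengths l _ B (fun _ hn => (List.eq_of_mem_replicate hn).le) ch hch

lemma map_poly_immFormula {Δ : ℕ} {l : List (Fin d)} (hl : l.length ≤ k ^ Δ) :
    (immFormula F k Δ l).map poly = (l.map (IMMMat F d)).prod := by
  induction Δ generalizing l with
  | zero =>
    match l, hl with
    | [], _ => ext u v; simp [immFormula, poly, Matrix.one_apply]
    | [i], _ => ext u v; simp [immFormula, poly, IMMMat]
  | succ Δ ih =>
    rw [immFormula, map_poly_matProd, List.map_map]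
    conv_rhs => rw [← flatten_splitLengths_replicate_pow hl, List.map_flatten, List.prod_flatten,
      List.map_map]
    exact congrArg List.prod (List.map_congr_left fun ch hch =>
      ih (length_le_of_mem_splitLengths_replicate hch))

lemma productDepth_immFormula_le (Δ : ℕ) (l : List (Fin d)) (u v : Fin 2) :
    (immFormula F k Δ l u v).productDepth ≤ Δ := by
  induction Δ generalizing l u v with
  | zero => match l with
    | [] | [_] | _ :: _ :: _ => simp [immFormula, productDepth]
  | succ Δ ih =>
    refine productDepth_matProd_le ?_
    simpa using fun ch _ => ih ch

lemma size_immFormula_le (hk : 1 ≤ k) (Δ : ℕ) (l : List (Fin d)) (u v : Fin 2) :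
    (immFormula F k Δ l u v).size ≤ 2 ^ (3 * k * Δ) := by
  induction Δ generalizing l u v with
  | zero => match l with
    | [] | [_] | _ :: _ :: _ => simp [immFormula, size]
  | succ Δ ih =>
    rw [immFormula]
    calc _ ≤ 1 + 2 ^ k * (1 + k * 2 ^ (3 * k * Δ)) := by
          simpa using size_matProd_le (u := u) (v := v) (s := 2 ^ (3 * k * Δ))
            (As := ((List.replicate k (k ^ Δ)).splitLengths l).map (immFormula F k Δ))
            (by simpa using fun ch _ => ih ch)
      _ ≤ 2 ^ (3 * k) * 2 ^ (3 * k * Δ) := one_add_two_pow_mul_le hk Nat.one_le_two_pow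
      _ = 2 ^ (3 * k * (Δ + 1)) := by ring

lemma fst_mem_of_mem_support_immFormula {Δ : ℕ} {l : List (Fin d)} (hl : l.length ≤ k ^ Δ)
    {u v : Fin 2} {x : IMMVar d} (hx : x ∈ (immFormula F k Δ l u v).support) : x.1 ∈ l := by
  induction Δ generalizing l u v with
  | zero => match l, hl with
    | [], _ => simp [immFormula, Formula.support] at hx
    | [i], _ => simp_all [immFormula, Formula.support]
  | succ Δ ih =>
    obtain ⟨A, hA, a, b, hxA⟩ := exists_of_mem_support_matProd hx
    obtain ⟨ch, hch, rfl⟩ := List.mem_map.1 hA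
    rw [← flatten_splitLengths_replicate_pow hl]
    exact List.mem_flatten.2 ⟨ch, hch, ih (length_le_of_mem_splitLengths_replicate hch) hxA⟩

lemma synMultilinear_immFormula {Δ : ℕ} {l : List (Fin d)} (hl : l.length ≤ k ^ Δ)
    (hnd : l.Nodup) (u v : Fin 2) : (immFormula F k Δ l u v).SynMultilinear := by
  induction Δ generalizing l u v with
  | zero => match l, hl with
    | [], _ | [_], _ => trivial
  | succ Δ ih =>
    obtain ⟨hblocks, hdisj⟩ :=
      List.nodup_flatten.1 ((flatten_splitLengths_replicate_pow hl).symm ▸ hnd)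
    refine synMultilinear_matProd ?_ ?_
    · simpa using fun ch hch =>
        ih (length_le_of_mem_splitLengths_replicate hch) (hblocks ch hch)
    · refine List.pairwise_map.2 (hdisj.imp_of_mem fun hch hch' hchch' a b a' b' => ?_)
      refine Finset.disjoint_left.2 fun x hx hx' => hchch'
        (fst_mem_of_mem_support_immFormula (length_le_of_mem_splitLengths_replicate hch) hx)
        (fst_mem_of_mem_support_immFormula (length_le_of_mem_splitLengths_replicate hch') hx')

end ImmFormula

lemma exists_le_pow_and_le_two_mul_rpow {d Δ : ℕ} (hd : 1 ≤ d) (hΔ : 1 ≤ Δ) :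
    ∃ k : ℕ, 1 ≤ k ∧ d ≤ k ^ Δ ∧ (k : ℝ) ≤ 2 * (d : ℝ) ^ (1 / (Δ : ℝ)) := by
  set r := (d : ℝ) ^ (1 / (Δ : ℝ))
  have hr : 1 ≤ r := Real.one_le_rpow (by exact_mod_cast hd) (by positivity)
  have hdr : (d : ℝ) = r ^ Δ := by
    rw [← Real.rpow_natCast, ← Real.rpow_mul (by positivity), one_div,
      inv_mul_cancel₀ (by positivity), Real.rpow_one]
  refine ⟨⌈r⌉₊, Nat.one_le_ceil_iff.2 (by linarith), ?_, ?_⟩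
  · exact_mod_cast hdr.le.trans (pow_le_pow_left₀ (by linarith) (Nat.le_ceil r) Δ)
  · linarith [Nat.ceil_lt_add_one (zero_le_one.trans hr)]

lemma one_add_two_mul_two_pow_le {m : ℕ} (hm : 1 ≤ m) : 1 + 2 * 2 ^ (3 * m) ≤ 2 ^ (5 * m) := by
  have h4 : 4 ≤ 2 ^ (2 * m) := by
    calc 4 = 2 ^ 2 := rfl
      _ ≤ 2 ^ (2 * m) := Nat.pow_le_pow_right (by norm_num) (by omega)
  have h1 : 1 ≤ 2 ^ (3 * m) := Nat.one_le_two_pow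
  calc 1 + 2 * 2 ^ (3 * m) ≤ 4 * 2 ^ (3 * m) := by omega
    _ ≤ 2 ^ (2 * m) * 2 ^ (3 * m) := Nat.mul_le_mul_right _ h4
    _ = 2 ^ (5 * m) := by rw [← pow_add]; ring_nf

/-- There is an absolute constant `c > 0` such that for every field `F`,
every `d ≥ 2` and every `Δ` with `1 ≤ Δ ≤ log₂ d`, there is a syntactically
multilinear formula over `F` of product-depth at most `Δ` and size at most
`2^(c·Δ·d^(1/Δ))` computing `IMM_d`. -/
theorem stmt_3 :
    ∃ c : ℝ, 0 < c ∧
      ∀ (F : Type) [Field F] (d : ℕ), 2 ≤ d →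
        ∀ Δ : ℕ, 1 ≤ Δ → (Δ : ℝ) ≤ Real.logb 2 d →
          ∃ φ : Formula F (IMMVar d), φ.SynMultilinear ∧ φ.productDepth ≤ Δ ∧
            (φ.size : ℝ) ≤ (2 : ℝ) ^ (c * Δ * (d : ℝ) ^ (1 / (Δ : ℝ))) ∧
            φ.poly = IMMPoly F d := by
  refine ⟨10, by norm_num, fun F _ d hd Δ hΔ _ => ?_⟩
  obtain ⟨k, hk, hdk, hkr⟩ := exists_le_pow_and_le_two_mul_rpow (by omega : 1 ≤ d) hΔ
  have hl : (List.finRange d).length ≤ k ^ Δ := by simpa using hdk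
  set A := immFormula F k Δ (List.finRange d)
  refine ⟨sumList [A 0 0, A 0 1], ?_, ?_, ?_, ?_⟩
  · exact synMultilinear_sumList (by simpa using
      ⟨synMultilinear_immFormula hl (List.nodup_finRange d) 0 0,
        synMultilinear_immFormula hl (List.nodup_finRange d) 0 1⟩)
  · exact productDepth_sumList_le (by simpa using
      ⟨productDepth_immFormula_le Δ _ 0 0, productDepth_immFormula_le Δ _ 0 1⟩)
  · have hsize : (sumList [A 0 0, A 0 1]).size ≤ 2 ^ (5 * (k * Δ)) := by
      have h00 : (A 0 0).size ≤ _ := size_immFormula_le (F := F) hk Δ (List.finRange d) 0 0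
      have h01 : (A 0 1).size ≤ _ := size_immFormula_le (F := F) hk Δ (List.finRange d) 0 1
      refine le_trans ?_ (one_add_two_mul_two_pow_le (Nat.one_le_iff_ne_zero.2 (by positivity)))
      rw [size_sumList, ← mul_assoc]
      simp only [List.map_cons, List.map_nil, List.sum_cons, List.sum_nil]
      omega
    calc ((sumList [A 0 0, A 0 1]).size : ℝ) ≤ (2 : ℝ) ^ ((5 * (k * Δ) : ℕ) : ℝ) := by
          rw [Real.rpow_natCast]; exact_mod_cast hsize
      _ ≤ _ := Real.rpow_le_rpow_of_exponent_le (by norm_num) (by push_cast; nlinarith)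
  · have hA : A.map poly = ((List.finRange d).map (IMMMat F d)).prod := map_poly_immFormula hl
    simp [IMMPoly, List.ofFn_eq_map, ← hA]
end

section
/- For every field F, every integer d ≥ 1, every π ∈ {1,2}^d and every a ∈ {0,1}^d, the restricted polynomial IMM_d|_{ρ_{π,a}} equals ∏_{i=1}^{m}(1 + y_i z_i) when |A| = 2m is even, and equals (∏_{i=1}^{m}(1 + y_i z_i))·(1 + y_{m+1}) when |A| = 2m+1 is odd. -/
open MvPolynomial

/-- `π(i−1)`, with the convention `π(0) = 1` (represented by `0 : Fin 2`). -/
def prevOf {d : ℕ} (π : Fin d → Fin 2) (i : Fin d) : Fin 2 :=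
  if _ : (i : ℕ) = 0 then 0 else π ⟨(i : ℕ) - 1, by have := i.isLt; omega⟩

/-- The number of indices `k ∈ A` (i.e. `a k = true`) with `k < i`; if `i ∈ A` is the
`j`-th smallest element of `A` (1-indexed), then `posIn a i = j − 1`. -/
def posIn {d : ℕ} (a : Fin d → Bool) (i : Fin d) : ℕ :=
  (Finset.univ.filter fun k => a k = true ∧ k < i).card

/-- `|A|` where `A = {i ∈ {1,…,d} : a_i = 1}`. -/
def cardA {d : ℕ} (a : Fin d → Bool) : ℕ :=
  (Finset.univ.filter fun i => a i = true).card

/-- The restriction `ρ_{π,a}`, sending each variable `x^(i)_{u,v}` to a fresh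
variable (`Sum.inl k` represents `y_{k+1}`, `Sum.inr k` represents `z_{k+1}`) or a
constant in `{0,1}`: if `i ∉ A`, the matrix `M^(i)` is set to the identity matrix when
`π(i−1) = π(i)` and to the flip permutation matrix otherwise; if `i` is the `j`-th
smallest element of `A` with `j` odd (i.e. `posIn a i` even), then
`x^(i)_{π(i−1),π(i)} ↦ y_{⌈j/2⌉}`, `x^(i)_{π(i−1),π(i)'} ↦ 1` and the rest to `0`;
if `j` is even, then `x^(i)_{π(i−1),π(i)} ↦ z_{j/2}`, `x^(i)_{π(i−1)',π(i)} ↦ 1` and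
the rest to `0`. The restricted polynomial `f|_ρ` is `MvPolynomial.aeval (rho F π a) f`. -/
noncomputable def rho (F : Type) [CommSemiring F] {d : ℕ} (π : Fin d → Fin 2)
    (a : Fin d → Bool) (x : IMMVar d) : MvPolynomial (ℕ ⊕ ℕ) F :=
  let i := x.1
  let u := x.2.1
  let v := x.2.2
  let p := prevOf π i
  if a i = true then
    if u = p ∧ v = π i then
      X (if posIn a i % 2 = 0 then Sum.inl (posIn a i / 2) else Sum.inr (posIn a i / 2))
    else if posIn a i % 2 = 0 then
      (if u = p ∧ v ≠ π i then 1 else 0)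
    else
      (if u ≠ p ∧ v = π i then 1 else 0)
  else
    if (u = v) ↔ (p = π i) then 1 else 0

/-!
Track the first row of the restricted partial products `(M^(1) ⋯ M^(n))|_ρ`. Once `2t`
elements of `A` have been passed, it is `∏_{j<t} (1 + y_j z_j)` times the unit vector at
`π(n)`; once `2t + 1` have been passed, it is `∏_{j<t} (1 + y_j z_j)` times the vector with
`y_t` at `π(n)` and `1` at the other position. A permutation matrix (`n ∉ A`) only moves the
marked position, a `y`-matrix turns the unit vector into the second shape, and a `z`-matrix
collapses the second shape back to `1 + y_t z_t` at `π(n)`. `IMM_d|_ρ` is the sum of the two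
entries of the final row.
-/

open Finset Matrix

section Restriction

variable {F : Type} [CommSemiring F] {d : ℕ}

noncomputable def substMat {S : Type*} (f : IMMVar d → S) (i : Fin d) :
    Matrix (Fin 2) (Fin 2) S :=
  Matrix.of fun u v => f (i, u, v)

theorem aeval_IMMPoly {S : Type*} [CommSemiring S] [Algebra F S] (f : IMMVar d → S) :
    aeval f (IMMPoly F d) =
      (List.ofFn (substMat f)).prod 0 0 + (List.ofFn (substMat f)).prod 0 1 := by
  have hprod : (List.ofFn (IMMMat F d)).prod.map (aeval f) = (List.ofFn (substMat f)).prod := by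
    rw [← AlgHom.mapMatrix_apply, map_list_prod, List.map_ofFn]
    congr 2
    funext i
    ext u v
    simp [IMMMat, substMat]
  rw [IMMPoly, map_add, ← hprod, map_apply, map_apply]

def countBelow (a : Fin d → Bool) (n : ℕ) : ℕ :=
  #{k | a k = true ∧ (k : ℕ) < n}

theorem posIn_eq_countBelow (a : Fin d → Bool) (i : Fin d) : posIn a i = countBelow a i := rfl

theorem cardA_eq_countBelow (a : Fin d → Bool) : cardA a = countBelow a d := by
  simp [cardA, countBelow]

theorem countBelow_succ (a : Fin d → Bool) (i : Fin d) :
    countBelow a (i + 1) = countBelow a i + (a i).toNat := by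
  have hsplit : univ.filter (fun k : Fin d => a k = true ∧ (k : ℕ) < i + 1) =
      univ.filter (fun k => a k = true ∧ (k : ℕ) < i) ∪
        univ.filter (fun k => a k = true ∧ k = i) := by
    ext k
    simp only [mem_filter, mem_univ, true_and, mem_union, Fin.ext_iff]
    grind
  have hlast : univ.filter (fun k : Fin d => a k = true ∧ k = i) = if a i then {i} else ∅ := by
    ext k
    cases h : a i <;> grind
  rw [countBelow, hsplit, card_union_of_disjoint, countBelow, hlast]
  · cases a i <;> rfl
  · exact disjoint_filter.2 fun k _ hk hk' => by grind

/-- The paper's `π(n)` for `0 ≤ n ≤ d`, with `π(0) = 1`. -/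
def prevAt (π : Fin d → Fin 2) (n : ℕ) : Fin 2 :=
  if h : 0 < n ∧ n ≤ d then π ⟨n - 1, by omega⟩ else 0

theorem prevOf_eq_prevAt (π : Fin d → Fin 2) (i : Fin d) : prevOf π i = prevAt π i := by
  unfold prevOf prevAt
  split_ifs <;> first | rfl | omega

theorem prevAt_succ (π : Fin d → Fin 2) (i : Fin d) : prevAt π (i + 1) = π i := by
  rw [prevAt, dif_pos (by omega)]
  rfl

variable (F) in
noncomputable def pairProd (t : ℕ) : MvPolynomial (ℕ ⊕ ℕ) F :=
  ∏ j ∈ range t, (1 + X (Sum.inl j) * X (Sum.inr j))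

theorem pairProd_succ (t : ℕ) :
    pairProd F (t + 1) = pairProd F t * (1 + X (Sum.inl t) * X (Sum.inr t)) :=
  prod_range_succ _ t

variable (F) in
/-- The first row of `(M^(1) ⋯ M^(n))|_ρ`, where `c = |A ∩ {1,…,n}|` and `p = π(n)`. -/
noncomputable def rowState (c : ℕ) (p : Fin 2) : Fin 2 → MvPolynomial (ℕ ⊕ ℕ) F := fun v =>
  if c % 2 = 0 then (if v = p then pairProd F (c / 2) else 0)
  else pairProd F (c / 2) * (if v = p then X (Sum.inl (c / 2)) else 1)

theorem rowState_vecMul_substMat_rho (π : Fin d → Fin 2) (a : Fin d → Bool) (i : Fin d) :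
    rowState F (posIn a i) (prevOf π i) ᵥ* substMat (rho F π a) i =
      rowState F (posIn a i + (a i).toNat) (π i) := by
  funext v
  simp only [vecMul, dotProduct, Fin.sum_univ_two, substMat, of_apply, rho, rowState]
  generalize posIn a i = c, prevOf π i = p, π i = q, a i = b
  obtain ⟨t, rfl | rfl⟩ := Nat.even_or_odd' c <;>
    cases b <;> fin_cases p <;> fin_cases q <;> fin_cases v <;>
    simp [Nat.add_mod, Nat.add_div, pairProd_succ] <;> ring

theorem row_prod_take_substMat_rho (π : Fin d → Fin 2) (a : Fin d → Bool) {n : ℕ}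
    (hn : n ≤ d) :
    ((List.ofFn (substMat (rho F π a))).take n).prod 0 =
      rowState F (countBelow a n) (prevAt π n) := by
  induction n with
  | zero =>
    funext v
    fin_cases v <;> simp [rowState, countBelow, prevAt, pairProd]
  | succ n ih =>
    have step := rowState_vecMul_substMat_rho (F := F) π a ⟨n, hn⟩
    rw [posIn_eq_countBelow, prevOf_eq_prevAt, ← countBelow_succ a ⟨n, hn⟩,
      ← prevAt_succ π ⟨n, hn⟩] at step
    rw [List.prod_take_succ _ _ (by simpa), mul_apply_eq_vecMul, ih (by omega), List.getElem_ofFn]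
    exact step

theorem aeval_rho_IMMPoly (π : Fin d → Fin 2) (a : Fin d → Bool) :
    aeval (rho F π a) (IMMPoly F d) = ∑ v, rowState F (cardA a) (prevAt π d) v := by
  rw [aeval_IMMPoly, Fin.sum_univ_two, cardA_eq_countBelow,
    ← row_prod_take_substMat_rho π a le_rfl, List.take_of_length_le (by simp)]

theorem sum_rowState_two_mul (m : ℕ) (p : Fin 2) :
    ∑ v, rowState F (2 * m) p v = pairProd F m := by
  fin_cases p <;> simp [rowState]

theorem sum_rowState_two_mul_add_one (m : ℕ) (p : Fin 2) :
    ∑ v, rowState F (2 * m + 1) p v = pairProd F m * (1 + X (Sum.inl m)) := by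
  fin_cases p <;> simp [rowState, Fin.sum_univ_two, Nat.add_mod, Nat.add_div] <;> ring

end Restriction

theorem stmt_8_general (F : Type) [Field F] (d : ℕ)
    (π : Fin d → Fin 2) (a : Fin d → Bool) (m : ℕ) :
    (cardA a = 2 * m →
      MvPolynomial.aeval (rho F π a) (IMMPoly F d) =
        ∏ j ∈ Finset.range m,
          (1 + (X (Sum.inl j) : MvPolynomial (ℕ ⊕ ℕ) F) * X (Sum.inr j))) ∧
    (cardA a = 2 * m + 1 →
      MvPolynomial.aeval (rho F π a) (IMMPoly F d) =
        (∏ j ∈ Finset.range m,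
          (1 + (X (Sum.inl j) : MvPolynomial (ℕ ⊕ ℕ) F) * X (Sum.inr j))) *
        (1 + X (Sum.inl m))) := by
  rw [aeval_rho_IMMPoly]
  exact ⟨fun h => h ▸ sum_rowState_two_mul m _, fun h => h ▸ sum_rowState_two_mul_add_one m _⟩

/-- For every field `F`, every `d ≥ 1`, every `π ∈ {1,2}^d` and every
`a ∈ {0,1}^d`, the restricted polynomial `IMM_d|_{ρ_{π,a}}` equals
`∏_{i=1}^m (1 + y_i z_i)` when `|A| = 2m`, and
`(∏_{i=1}^m (1 + y_i z_i))·(1 + y_{m+1})` when `|A| = 2m+1`.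
(Here `y_i` is `X (Sum.inl (i-1))` and `z_i` is `X (Sum.inr (i-1))`.) -/
theorem stmt_8 (F : Type) [Field F] (d : ℕ) (hd : 1 ≤ d)
    (π : Fin d → Fin 2) (a : Fin d → Bool) (m : ℕ) :
    (cardA a = 2 * m →
      MvPolynomial.aeval (rho F π a) (IMMPoly F d) =
        ∏ j ∈ Finset.range m,
          (1 + (X (Sum.inl j) : MvPolynomial (ℕ ⊕ ℕ) F) * X (Sum.inr j))) ∧
    (cardA a = 2 * m + 1 →
      MvPolynomial.aeval (rho F π a) (IMMPoly F d) =
        (∏ j ∈ Finset.range m,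
          (1 + (X (Sum.inl j) : MvPolynomial (ℕ ⊕ ℕ) F) * X (Sum.inr j))) *
        (1 + X (Sum.inl m))) :=
  stmt_8_general F d π a m
end

section
/- Let F be a field and t ≥ 1. Let Y = Y_1 ∪ ⋯ ∪ Y_t and Z = Z_1 ∪ ⋯ ∪ Z_t be finite disjoint variable sets, where the sets Y_1,…,Y_t are pairwise disjoint and the sets Z_1,…,Z_t are pairwise disjoint. For each i let g_i ∈ F[Y_i ∪ Z_i] be a multilinear polynomial, and let g = g_1 ⋯ g_t (a multilinear polynomial in F[Y ∪ Z]). Then rank(M_{(Y,Z)}(g)) = ∏_{i=1}^t rank(M_{(Y_i,Z_i)}(g_i)). -/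
open MvPolynomial

/-- The partial derivative matrix `M_{(Y,Z)}(g)`: rows indexed by subsets `S ⊆ Y`,
columns by subsets `T ⊆ Z`, with `(S,T)` entry the coefficient in `g` of the monomial
`∏_{y∈S} y · ∏_{z∈T} z`. (Left summands of `V ⊕ W` are the `Y`-side variables,
right summands the `Z`-side variables.) -/
noncomputable def pdMatrix (F : Type) [CommSemiring F] {V W : Type}
    (Y : Finset V) (Z : Finset W) (g : MvPolynomial (V ⊕ W) F) :
    Matrix {S // S ∈ Y.powerset} {T // T ∈ Z.powerset} F :=
  fun S T => MvPolynomial.coeff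
    ((S.1.sum fun y => Finsupp.single (Sum.inl y) 1) +
     (T.1.sum fun z => Finsupp.single (Sum.inr z) 1)) g

/-!
Since `g` and `h` live in disjoint sets of variables, the coefficient in `g * h` of the monomial
indexed by `(S₁ ∪ S₂, T₁ ∪ T₂)` is the product of the coefficients of `(S₁, T₁)` in `g` and of
`(S₂, T₂)` in `h`. Indexing the rows and columns of `M(g * h)` by such splittings, it becomes the
Kronecker product `M(g) ⊗ M(h)`, whose rank is the product of the ranks because over a field the
range of `f ⊗ g` is `range f ⊗ range g`. Induction on the number of factors finishes the proof.
-/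

open Matrix Kronecker

theorem LinearMap.finrank_range_tensorProductMap {K M N M' N' : Type*} [Field K]
    [AddCommGroup M] [Module K M] [AddCommGroup N] [Module K N]
    [AddCommGroup M'] [Module K M'] [AddCommGroup N'] [Module K N']
    (f : M →ₗ[K] M') (g : N →ₗ[K] N') :
    Module.finrank K (range (TensorProduct.map f g)) =
      Module.finrank K (range f) * Module.finrank K (range g) := by
  -- `f ⊗ g` factors as a surjection onto `range f ⊗ range g` followed by an injection.
  have hfactor : TensorProduct.map f g =
      TensorProduct.mapIncl (range f) (range g) ∘ₗ
        TensorProduct.map f.rangeRestrict g.rangeRestrict := by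
    rw [← TensorProduct.map_comp]; rfl
  have hsurj := TensorProduct.map_surjective f.surjective_rangeRestrict g.surjective_rangeRestrict
  rw [hfactor, range_comp_of_range_eq_top _ (range_eq_top.2 hsurj),
    finrank_range_of_inj (Module.Flat.tensorProduct_mapIncl_injective_of_right _ _),
    Module.finrank_tensorProduct]

theorem Matrix.rank_kronecker {K m n p q : Type*} [Field K]
    [Fintype m] [Fintype n] [Fintype p] [Fintype q] [DecidableEq n] [DecidableEq q]
    (A : Matrix m n K) (B : Matrix p q K) :
    (A ⊗ₖ B).rank = A.rank * B.rank := by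
  let bm := Pi.basisFun K m
  let bn := Pi.basisFun K n
  let bp := Pi.basisFun K p
  let bq := Pi.basisFun K q
  rw [rank_eq_finrank_range_toLin (A ⊗ₖ B) (bm.tensorProduct bp) (bn.tensorProduct bq),
    toLin_kronecker, rank_eq_finrank_range_toLin A bm bn, rank_eq_finrank_range_toLin B bp bq,
    LinearMap.finrank_range_tensorProductMap]

theorem Finsupp.filter_add_eq_left {α : Type*} {A B : Set α} [DecidablePred (· ∈ A)]
    (hAB : Disjoint A B) {d₁ d₂ : α →₀ ℕ} (hd₁ : ↑d₁.support ⊆ A) (hd₂ : ↑d₂.support ⊆ B) :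
    (d₁ + d₂).filter (· ∈ A) = d₁ := by
  rw [filter_add, (filter_eq_self_iff _ _).2 fun x hx => hd₁ (mem_support_iff.2 hx),
    (filter_eq_zero_iff _ _).2 fun x hxA =>
      notMem_support_iff.1 fun hx => hAB.notMem_of_mem_left hxA (hd₂ hx),
    add_zero]

theorem MvPolynomial.support_subset_of_mem_supported {R σ : Type*} [CommSemiring R]
    {s : Set σ} {p : MvPolynomial σ R} (hp : p ∈ supported R s) {d : σ →₀ ℕ}
    (hd : coeff d p ≠ 0) : ↑d.support ⊆ s := fun v hv =>
  mem_supported.1 hp ((mem_vars_iff_mem_support v).2 ⟨d, mem_support_iff.2 hd, hv⟩)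

theorem MvPolynomial.coeff_add_mul_of_disjoint {R σ : Type*} [CommSemiring R] {A B : Set σ}
    (hAB : Disjoint A B) {p q : MvPolynomial σ R}
    (hp : p ∈ supported R A) (hq : q ∈ supported R B)
    {d₁ d₂ : σ →₀ ℕ} (hd₁ : ↑d₁.support ⊆ A) (hd₂ : ↑d₂.support ⊆ B) :
    coeff (d₁ + d₂) (p * q) = coeff d₁ p * coeff d₂ q := by
  classical
  rw [coeff_mul]
  refine Finset.sum_eq_single (d₁, d₂) (fun e he hne => ?_) (by simp)
  by_contra hcoeff
  have he₁ := support_subset_of_mem_supported hp (left_ne_zero_of_mul hcoeff)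
  have he₂ := support_subset_of_mem_supported hq (right_ne_zero_of_mul hcoeff)
  rw [Finset.HasAntidiagonal.mem_antidiagonal] at he
  have h₁ : e.1 = d₁ := by
    rw [← Finsupp.filter_add_eq_left hAB he₁ he₂, he, Finsupp.filter_add_eq_left hAB hd₁ hd₂]
  rw [h₁] at he
  exact hne (Prod.ext h₁ (add_left_cancel he))

def Finset.powersetProdEquiv {α : Type*} [DecidableEq α] {s t : Finset α} (h : Disjoint s t) :
    {S // S ∈ s.powerset} × {T // T ∈ t.powerset} ≃ {U // U ∈ (s ∪ t).powerset} where
  toFun P := ⟨P.1.1 ∪ P.2.1, Finset.mem_powerset.2 <|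
    Finset.union_subset_union (Finset.mem_powerset.1 P.1.2) (Finset.mem_powerset.1 P.2.2)⟩
  invFun U := (⟨U.1 ∩ s, Finset.mem_powerset.2 Finset.inter_subset_right⟩,
    ⟨U.1 ∩ t, Finset.mem_powerset.2 Finset.inter_subset_right⟩)
  left_inv := fun ⟨⟨S, hS⟩, ⟨T, hT⟩⟩ => by
    rw [Finset.mem_powerset] at hS hT
    ext x <;> simp only [Finset.mem_inter, Finset.mem_union] <;> grind [Finset.disjoint_left]
  right_inv := fun ⟨U, hU⟩ => by
    rw [Finset.mem_powerset] at hU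
    ext x
    simp only [Finset.mem_inter, Finset.mem_union]
    grind

theorem Set.disjoint_image_inl_union_image_inr {α β : Type*} {A₁ A₂ : Set α} {B₁ B₂ : Set β}
    (hA : Disjoint A₁ A₂) (hB : Disjoint B₁ B₂) :
    Disjoint (Sum.inl '' A₁ ∪ Sum.inr '' B₁) (Sum.inl '' A₂ ∪ Sum.inr '' B₂ : Set (α ⊕ β)) := by
  rw [disjoint_left]
  rintro (y | z) h₁ h₂ <;> simp only [mem_union, mem_image, Sum.inl.injEq, Sum.inr.injEq,
    reduceCtorEq, and_false, exists_false, exists_eq_right, or_false, false_or] at h₁ h₂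
  exacts [hA.notMem_of_mem_left h₁ h₂, hB.notMem_of_mem_left h₁ h₂]

section PartialDerivativeMatrix

variable {F V W : Type} [Field F]

noncomputable def pdExponent (S : Finset V) (T : Finset W) : V ⊕ W →₀ ℕ :=
  (S.sum fun y => Finsupp.single (Sum.inl y) 1) + (T.sum fun z => Finsupp.single (Sum.inr z) 1)

theorem pdMatrix_apply (Y : Finset V) (Z : Finset W) (g : MvPolynomial (V ⊕ W) F)
    (S : {S // S ∈ Y.powerset}) (T : {T // T ∈ Z.powerset}) :
    pdMatrix F Y Z g S T = coeff (pdExponent S.1 T.1) g := rfl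

theorem pdExponent_union [DecidableEq V] [DecidableEq W] {S₁ S₂ : Finset V} {T₁ T₂ : Finset W}
    (hS : Disjoint S₁ S₂) (hT : Disjoint T₁ T₂) :
    pdExponent (S₁ ∪ S₂) (T₁ ∪ T₂) = pdExponent S₁ T₁ + pdExponent S₂ T₂ := by
  rw [pdExponent, pdExponent, pdExponent, Finset.sum_union hS, Finset.sum_union hT,
    add_add_add_comm]

theorem support_pdExponent_subset {S Y : Finset V} {T Z : Finset W} (hS : S ⊆ Y) (hT : T ⊆ Z) :
    ↑(pdExponent S T).support ⊆ Sum.inl '' (Y : Set V) ∪ Sum.inr '' (Z : Set W) := by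
  classical
  rintro (y | z) hv <;> by_contra hvYZ <;> simp_all [pdExponent, Finsupp.single_apply]
  exacts [hvYZ (hS hv), hvYZ (hT hv)]

theorem rank_pdMatrix_one : (pdMatrix F (∅ : Finset V) (∅ : Finset W) 1).rank = 1 := by
  let e (α : Type) : {S : Finset α // S ∈ (∅ : Finset α).powerset} ≃ Unit :=
    { toFun _ := (), invFun _ := ⟨∅, by simp⟩
      left_inv S := Subtype.ext (Finset.subset_empty.1 (Finset.mem_powerset.1 S.2)).symm
      right_inv _ := rfl }
  have hunit : pdMatrix F (∅ : Finset V) (∅ : Finset W) 1 =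
      (1 : Matrix Unit Unit F).submatrix (e V) (e W) := by
    ext ⟨S, hS⟩ ⟨T, hT⟩
    obtain rfl := Finset.subset_empty.1 (Finset.mem_powerset.1 hS)
    obtain rfl := Finset.subset_empty.1 (Finset.mem_powerset.1 hT)
    rw [pdMatrix_apply]
    simp [pdExponent]
  rw [hunit, rank_submatrix, rank_one, Fintype.card_unit]

variable [DecidableEq V] [DecidableEq W]

theorem pdMatrix_mul {Y₁ Y₂ : Finset V} {Z₁ Z₂ : Finset W} (hY : Disjoint Y₁ Y₂)
    (hZ : Disjoint Z₁ Z₂) {g h : MvPolynomial (V ⊕ W) F}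
    (hg : g ∈ supported F (Sum.inl '' ↑Y₁ ∪ Sum.inr '' ↑Z₁))
    (hh : h ∈ supported F (Sum.inl '' ↑Y₂ ∪ Sum.inr '' ↑Z₂)) :
    (pdMatrix F (Y₁ ∪ Y₂) (Z₁ ∪ Z₂) (g * h)).submatrix
        (Finset.powersetProdEquiv hY) (Finset.powersetProdEquiv hZ) =
      pdMatrix F Y₁ Z₁ g ⊗ₖ pdMatrix F Y₂ Z₂ h := by
  ext ⟨⟨S₁, hS₁⟩, ⟨S₂, hS₂⟩⟩ ⟨⟨T₁, hT₁⟩, ⟨T₂, hT₂⟩⟩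
  rw [Finset.mem_powerset] at hS₁ hS₂ hT₁ hT₂
  rw [submatrix_apply, kroneckerMap_apply, pdMatrix_apply, pdMatrix_apply, pdMatrix_apply]
  simp only [Finset.powersetProdEquiv, Equiv.coe_fn_mk]
  rw [pdExponent_union (hY.mono hS₁ hS₂) (hZ.mono hT₁ hT₂),
    coeff_add_mul_of_disjoint (Set.disjoint_image_inl_union_image_inr (Finset.disjoint_coe.2 hY)
      (Finset.disjoint_coe.2 hZ)) hg hh (support_pdExponent_subset hS₁ hT₁)
      (support_pdExponent_subset hS₂ hT₂)]

theorem rank_pdMatrix_mul {Y₁ Y₂ : Finset V} {Z₁ Z₂ : Finset W} (hY : Disjoint Y₁ Y₂)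
    (hZ : Disjoint Z₁ Z₂) {g h : MvPolynomial (V ⊕ W) F}
    (hg : g ∈ supported F (Sum.inl '' ↑Y₁ ∪ Sum.inr '' ↑Z₁))
    (hh : h ∈ supported F (Sum.inl '' ↑Y₂ ∪ Sum.inr '' ↑Z₂)) :
    (pdMatrix F (Y₁ ∪ Y₂) (Z₁ ∪ Z₂) (g * h)).rank =
      (pdMatrix F Y₁ Z₁ g).rank * (pdMatrix F Y₂ Z₂ h).rank := by
  rw [← rank_submatrix _ (Finset.powersetProdEquiv hY) (Finset.powersetProdEquiv hZ),
    pdMatrix_mul hY hZ hg hh, rank_kronecker]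

theorem rank_pdMatrix_prod {ι : Type*} [DecidableEq ι] {Y : ι → Finset V} {Z : ι → Finset W}
    {g : ι → MvPolynomial (V ⊕ W) F} (s : Finset ι)
    (hY : (s : Set ι).PairwiseDisjoint Y) (hZ : (s : Set ι).PairwiseDisjoint Z)
    (hg : ∀ i ∈ s, g i ∈ supported F (Sum.inl '' ↑(Y i) ∪ Sum.inr '' ↑(Z i))) :
    (pdMatrix F (s.biUnion Y) (s.biUnion Z) (∏ i ∈ s, g i)).rank =
      ∏ i ∈ s, (pdMatrix F (Y i) (Z i) (g i)).rank := by
  induction s using Finset.induction with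
  | empty =>
    rw [Finset.biUnion_empty, Finset.biUnion_empty, Finset.prod_empty, Finset.prod_empty]
    exact rank_pdMatrix_one
  | insert a s ha ih =>
    rw [Finset.coe_insert, Set.pairwiseDisjoint_insert_of_notMem (Finset.mem_coe.not.2 ha)]
      at hY hZ
    have hgs : (∏ i ∈ s, g i) ∈
        supported F (Sum.inl '' ↑(s.biUnion Y) ∪ Sum.inr '' ↑(s.biUnion Z)) :=
      Subalgebra.prod_mem _ fun i hi => supported_mono (Set.union_subset_union
        (Set.image_mono (Finset.coe_subset.2 (Finset.subset_biUnion_of_mem Y hi)))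
        (Set.image_mono (Finset.coe_subset.2 (Finset.subset_biUnion_of_mem Z hi))))
        (hg i (Finset.mem_insert_of_mem hi))
    rw [Finset.biUnion_insert, Finset.biUnion_insert, Finset.prod_insert ha,
      Finset.prod_insert ha,
      rank_pdMatrix_mul ((Finset.disjoint_biUnion_right ..).2 hY.2)
        ((Finset.disjoint_biUnion_right ..).2 hZ.2)
        (hg a (Finset.mem_insert_self a s)) hgs,
      ih hY.1 hZ.1 fun i hi => hg i (Finset.mem_insert_of_mem hi)]

end PartialDerivativeMatrix

theorem stmt_12_general (F : Type) [Field F] (t : ℕ)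
    {V W : Type} [DecidableEq V] [DecidableEq W]
    (Y : Fin t → Finset V) (Z : Fin t → Finset W)
    (hY : ∀ i j, i ≠ j → Disjoint (Y i) (Y j))
    (hZ : ∀ i j, i ≠ j → Disjoint (Z i) (Z j))
    (g : Fin t → MvPolynomial (V ⊕ W) F)
    (hsupp : ∀ i, g i ∈ MvPolynomial.supported F
      ((Sum.inl '' ↑(Y i)) ∪ (Sum.inr '' ↑(Z i)))) :
    (pdMatrix F (Finset.univ.biUnion Y) (Finset.univ.biUnion Z) (∏ i, g i)).rank =
      ∏ i, (pdMatrix F (Y i) (Z i) (g i)).rank :=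
  rank_pdMatrix_prod Finset.univ (fun i _ j _ hij => hY i j hij) (fun i _ j _ hij => hZ i j hij)
    fun i _ => hsupp i

/-- multiplicativity of the partial-derivative-matrix rank: if
`Y = Y_1 ∪ ⋯ ∪ Y_t` and `Z = Z_1 ∪ ⋯ ∪ Z_t` with the `Y_i` pairwise disjoint and the
`Z_i` pairwise disjoint, each `g_i ∈ F[Y_i ∪ Z_i]` is multilinear and `g = g_1 ⋯ g_t`,
then `rank(M_{(Y,Z)}(g)) = ∏ᵢ rank(M_{(Y_i,Z_i)}(g_i))`. (The `Y`-side variables are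
the left summands of `V ⊕ W`, the `Z`-side variables the right summands.) -/
theorem stmt_12 (F : Type) [Field F] (t : ℕ) (ht : 1 ≤ t)
    {V W : Type} [DecidableEq V] [DecidableEq W]
    (Y : Fin t → Finset V) (Z : Fin t → Finset W)
    (hY : ∀ i j, i ≠ j → Disjoint (Y i) (Y j))
    (hZ : ∀ i j, i ≠ j → Disjoint (Z i) (Z j))
    (g : Fin t → MvPolynomial (V ⊕ W) F)
    (hsupp : ∀ i, g i ∈ MvPolynomial.supported F
      ((Sum.inl '' ↑(Y i)) ∪ (Sum.inr '' ↑(Z i))))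
    (hml : ∀ i, IsMultilinearPoly (g i)) :
    (pdMatrix F (Finset.univ.biUnion Y) (Finset.univ.biUnion Z) (∏ i, g i)).rank =
      ∏ i, (pdMatrix F (Y i) (Z i) (g i)).rank :=
  stmt_12_general F t Y Z hY hZ g hsupp
end

section
/- There is an absolute constant c > 0 with the following property. Let d, t ≥ 1 be integers and let χ : X → {1,…,t} be a surjective coloring of the variables. With the convention π(0) = 1, choose π uniformly at random from {1,2}^d and let C^d_π = {χ(x^{(i)}_{π(i−1),π(i)}) : i ∈ {1,…,d}} be the set of colors appearing along the path determined by π. Then Pr[|C^d_π| ≤ t/100] ≤ 2^{−c·t}. -/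
open MvPolynomial

lemma gap_aux : ∀ (n : ℕ) (A : Finset ℕ), A.card ≤ n →
    ∃ B ⊆ A, A.card ≤ 2 * B.card ∧
      ∀ x ∈ B, ∀ y ∈ B, x ≠ y → x + 2 ≤ y ∨ y + 2 ≤ x := by
  intro n
  induction n with
  | zero =>
    intro A hA
    exact ⟨∅, Finset.empty_subset _, by omega, by simp⟩
  | succ n ih =>
    intro A hA
    rcases A.eq_empty_or_nonempty with rfl | hne
    · exact ⟨∅, Finset.empty_subset _, by simp, by simp⟩
    · set x := A.min' hne with hxdef
      have hxA : x ∈ A := A.min'_mem hne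
      set A' : Finset ℕ := A \ {x, x + 1} with hA'def
      have hsub : A' ⊆ A := Finset.sdiff_subset
      have hcard' : A'.card ≤ n := by
        have h1 : A'.card < A.card := by
          apply Finset.card_lt_card
          constructor
          · exact hsub
          · intro hAsub
            have := hAsub hxA
            simp [hA'def] at this
        omega
      obtain ⟨B', hB'sub, hB'card, hB'gap⟩ := ih A' hcard'
      refine ⟨insert x B', ?_, ?_, ?_⟩
      · intro y hy
        rcases Finset.mem_insert.mp hy with rfl | hy
        · exact hxA
        · exact hsub (hB'sub hy)
      · have hxB' : x ∉ B' := by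
          intro hx
          have := hB'sub hx
          simp [hA'def] at this
        rw [Finset.card_insert_of_notMem hxB']
        have hle : A.card - 2 ≤ A'.card := by
          have := Finset.le_card_sdiff ({x, x+1} : Finset ℕ) A
          have h2 : ({x, x+1} : Finset ℕ).card ≤ 2 := Finset.card_insert_le _ _ |>.trans (by simp)
          rw [← hA'def] at this
          omega
        omega
      · intro a ha b hb hab
        have key : ∀ y ∈ B', x + 2 ≤ y := by
          intro y hy
          have hyA' := hB'sub hy
          have hyA : y ∈ A := hsub hyA'
          have h1 : x ≤ y := A.min'_le y hyA
          have h2 : y ≠ x ∧ y ≠ x + 1 := by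
            have := Finset.mem_sdiff.mp hyA'
            simpa using this.2
          omega
        rcases Finset.mem_insert.mp ha with rfl | ha <;>
          rcases Finset.mem_insert.mp hb with rfl | hb
        · omega
        · exact Or.inl (key _ hb)
        · exact Or.inr (key _ ha)
        · exact hB'gap a ha b hb hab
lemma exists_reps {d t : ℕ} (ht : 100 ≤ t) (χ : IMMVar d → Fin t)
    (hχ : Function.Surjective χ) :
    ∃ (m : ℕ) (A B : Fin m → Fin d) (U V : Fin m → Fin 2) (col : Fin m → Fin t),
      Function.Injective col ∧
      (∀ j, χ (B j, U j, V j) = col j) ∧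
      (∀ j, (A j : ℕ) + 1 = (B j : ℕ)) ∧
      Function.Injective (Sum.elim A B) ∧
      t ≤ 9 * m := by
  classical
  set rep : Fin t → IMMVar d := Function.surjInv hχ with hrep
  have hrepχ : ∀ c, χ (rep c) = c := fun c => Function.surjInv_eq hχ c
  have hrepinj : Function.Injective rep := by
    intro a b hab
    have := congrArg χ hab
    rwa [hrepχ, hrepχ] at this
  set L : Finset ℕ := Finset.univ.image (fun c : Fin t => ((rep c).1 : ℕ)) with hL
  -- t ≤ 4 * L.card
  have hfib : ∀ b ∈ L, (Finset.univ.filter (fun c : Fin t => ((rep c).1 : ℕ) = b)).card ≤ 4 := by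
    intro b hb
    have : (Finset.univ.filter (fun c : Fin t => ((rep c).1 : ℕ) = b)).card
        ≤ (Finset.univ : Finset (Fin 2 × Fin 2)).card := by
      apply Finset.card_le_card_of_injOn (fun c => (rep c).2)
      · intro c _; exact Finset.mem_univ _
      · intro c hc c' hc' hcc
        apply hrepinj
        have h1 : ((rep c).1 : ℕ) = b := by simpa using (Finset.mem_filter.mp hc).2
        have h2 : ((rep c').1 : ℕ) = b := by simpa using (Finset.mem_filter.mp hc').2
        have : (rep c).1 = (rep c').1 := Fin.ext (h1.trans h2.symm)
        exact Prod.ext this hcc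
    simpa using this
  have htL : t ≤ 4 * L.card := by
    have := Finset.card_le_mul_card_image (s := (Finset.univ : Finset (Fin t)))
      (f := fun c : Fin t => ((rep c).1 : ℕ)) 4 hfib
    simpa [hL] using this
  set L' : Finset ℕ := L.filter (fun x => x ≠ 0) with hL'
  have hL'card : L.card ≤ L'.card + 1 := by
    have : L ⊆ insert 0 L' := by
      intro x hx
      by_cases hx0 : x = 0
      · simp [hx0]
      · simp [hL', Finset.mem_filter, hx, hx0]
    calc L.card ≤ (insert 0 L').card := Finset.card_le_card this
      _ ≤ L'.card + 1 := Finset.card_insert_le _ _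
  obtain ⟨G, hGsub, hGcard, hGgap⟩ := gap_aux L'.card L' le_rfl
  have hmt : t ≤ 9 * G.card := by
    have hm12 : 12 ≤ G.card := by omega
    omega
  -- enumerate G
  set m := G.card with hm
  set e : Fin m → {x // x ∈ G} := fun j => G.equivFin.symm (hm ▸ j) with he
  have heinj : Function.Injective (fun j => ((e j : ℕ))) := by
    intro a b hab
    have : e a = e b := Subtype.ext hab
    exact G.equivFin.symm.injective this
  have hval : ∀ j, (e j : ℕ) ∈ G := fun j => (e j).2
  have hvalL : ∀ j, (e j : ℕ) ∈ L := fun j => Finset.filter_subset _ _ (hGsub (hval j))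
  have hvalne : ∀ j, (e j : ℕ) ≠ 0 := fun j =>
    (Finset.mem_filter.mp (hGsub (hval j))).2
  -- choose colors
  have hchoose : ∀ j : Fin m, ∃ c : Fin t, ((rep c).1 : ℕ) = (e j : ℕ) := by
    intro j
    have := hvalL j
    simp only [hL, Finset.mem_image, Finset.mem_univ, true_and] at this
    exact this
  choose col hcol using hchoose
  have hlt : ∀ j : Fin m, (e j : ℕ) < d := by
    intro j
    have := ((rep (col j)).1).isLt
    rw [hcol j] at this
    exact this
  refine ⟨m, fun j => ⟨(e j : ℕ) - 1, by have := hlt j; omega⟩,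
    fun j => (rep (col j)).1,
    fun j => (rep (col j)).2.1, fun j => (rep (col j)).2.2, col, ?_, ?_, ?_, ?_, hm ▸ hmt⟩
  · -- col injective
    intro a b hab
    apply heinj
    show ((e a : ℕ)) = ((e b : ℕ))
    rw [← hcol a, ← hcol b, hab]
  · intro j
    rw [← hrepχ (col j)]
  · intro j
    simp only [hcol j]
    have := hvalne j
    omega
  · -- Sum.elim injective
    have hgap : ∀ a b : Fin m, a ≠ b →
        (e a : ℕ) + 2 ≤ (e b : ℕ) ∨ (e b : ℕ) + 2 ≤ (e a : ℕ) := by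
      intro a b hab
      apply hGgap _ (hval a) _ (hval b)
      intro h
      exact hab (heinj h)
    intro s s' hss
    have hBval : ∀ j, ((rep (col j)).1 : ℕ) = (e j : ℕ) := hcol
    rcases s with a | a <;> rcases s' with b | b <;>
      simp only [Sum.elim_inl, Sum.elim_inr] at hss
    · congr 1
      by_contra hab
      have := hgap a b hab
      have h1 := hvalne a; have h2 := hvalne b
      have := congrArg Fin.val hss
      simp only at this
      omega
    · exfalso
      have := congrArg Fin.val hss
      simp only [hBval b] at this
      by_cases hab : a = b
      · subst hab; have := hvalne a; omega
      · have := hgap a b hab; have h1 := hvalne a; omega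
    · exfalso
      have := congrArg Fin.val hss
      simp only [hBval a] at this
      by_cases hab : a = b
      · subst hab; have := hvalne a; omega
      · have := hgap a b hab; have h1 := hvalne b; omega
    · congr 1
      apply heinj
      show ((e a : ℕ)) = ((e b : ℕ))
      rw [← hBval a, ← hBval b, hss]

lemma count_bad {d m k : ℕ} (A B : Fin m → Fin d) (U V : Fin m → Fin 2)
    (hAB : Function.Injective (Sum.elim A B)) :
    ((Finset.univ.filter (fun π : Fin d → Fin 2 =>
        (Finset.univ.filter (fun j => π (A j) = U j ∧ π (B j) = V j)).card ≤ k)).card : ℝ)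
      ≤ 2^k * (7/2)^m * 2^(d - 2*m) := by
  classical
  set tgt : Fin m → Fin 2 × Fin 2 := fun j => (U j, V j) with htgt
  set pat : (Fin d → Fin 2) → (Fin m → Fin 2 × Fin 2) := fun π j => (π (A j), π (B j)) with hpat
  set mfun : (Fin m → Fin 2 × Fin 2) → ℕ :=
    fun g => (Finset.univ.filter (fun j => g j = tgt j)).card with hmfun
  have hcond : ∀ π : Fin d → Fin 2,
      (Finset.univ.filter (fun j => π (A j) = U j ∧ π (B j) = V j)).card = mfun (pat π) := by
    intro π
    have : (Finset.univ.filter (fun j => π (A j) = U j ∧ π (B j) = V j)) =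
        (Finset.univ.filter (fun j => pat π j = tgt j)) := by
      apply Finset.filter_congr
      intro j _
      simp [hpat, htgt, Prod.ext_iff]
    rw [this]
  simp only [hcond]
  set T : Finset (Fin d) := Finset.univ.image (Sum.elim A B) with hT
  have hTcard : T.card = 2 * m := by
    rw [hT, Finset.card_image_of_injective _ hAB]
    simp [two_mul]
  have h2m : 2 * m ≤ d := by
    have := Fintype.card_le_of_injective _ hAB
    simpa [two_mul] using this
  -- fiber bound
  have hfiber : ∀ g : Fin m → Fin 2 × Fin 2,
      (Finset.univ.filter (fun π : Fin d → Fin 2 => pat π = g)).card ≤ 2^(d - 2*m) := by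
    intro g
    have hcardfun : Fintype.card ({i : Fin d // i ∉ T} → Fin 2) = 2^(d - 2*m) := by
      rw [Fintype.card_fun]
      congr 1
      rw [Fintype.card_subtype_compl]
      simp [hTcard]
    calc (Finset.univ.filter (fun π : Fin d → Fin 2 => pat π = g)).card
        ≤ (Finset.univ : Finset ({i : Fin d // i ∉ T} → Fin 2)).card := by
          apply Finset.card_le_card_of_injOn (fun π => fun i => π i.1)
          · intro π _; exact Finset.mem_univ _
          · intro π hπ π' hπ' hres
            have hg : pat π = g := (Finset.mem_filter.mp hπ).2
            have hg' : pat π' = g := (Finset.mem_filter.mp hπ').2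
            funext i
            by_cases hi : i ∈ T
            · rw [hT] at hi
              obtain ⟨s, _, hs⟩ := Finset.mem_image.mp hi
              rcases s with j | j
              · have h1 : (pat π j).1 = (pat π' j).1 := by rw [hg, hg']
                simp only [hpat] at h1
                simpa [← hs] using h1
              · have h1 : (pat π j).2 = (pat π' j).2 := by rw [hg, hg']
                simp only [hpat] at h1
                simpa [← hs] using h1
            · exact congrFun hres ⟨i, hi⟩
      _ = 2^(d - 2*m) := by rw [Finset.card_univ, hcardfun]
  set Gbad : Finset (Fin m → Fin 2 × Fin 2) := Finset.univ.filter (fun g => mfun g ≤ k)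
    with hGbad
  have hmap : ∀ π ∈ (Finset.univ.filter (fun π : Fin d → Fin 2 => mfun (pat π) ≤ k)),
      pat π ∈ Gbad := by
    intro π hπ
    simp only [hGbad, Finset.mem_filter, Finset.mem_univ, true_and]
    exact (Finset.mem_filter.mp hπ).2
  have hsplit : (Finset.univ.filter (fun π : Fin d → Fin 2 => mfun (pat π) ≤ k)).card
      ≤ Gbad.card * 2^(d - 2*m) := by
    rw [Finset.card_eq_sum_card_fiberwise hmap]
    calc ∑ g ∈ Gbad, ((Finset.univ.filter (fun π : Fin d → Fin 2 => mfun (pat π) ≤ k)).filter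
          (fun π => pat π = g)).card
        ≤ ∑ g ∈ Gbad, 2^(d - 2*m) := by
          apply Finset.sum_le_sum
          intro g _
          exact le_trans (Finset.card_le_card (by
            intro π hπ
            simp only [Finset.mem_filter, Finset.mem_univ, true_and] at *
            exact hπ.2)) (hfiber g)
      _ = Gbad.card * 2^(d - 2*m) := by rw [Finset.sum_const, smul_eq_mul]
  -- Gbad bound over ℝ
  have hGbadcard : (Gbad.card : ℝ) ≤ 2^k * (7/2)^m := by
    have hterm : ∀ g ∈ Gbad, (1:ℝ) ≤ 2^k * (1/2)^(mfun g) := by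
      intro g hg
      have hk : mfun g ≤ k := by
        simpa [hGbad] using (Finset.mem_filter.mp hg).2
      have h1 : ((1:ℝ)/2)^k ≤ (1/2)^(mfun g) :=
        pow_le_pow_of_le_one (by norm_num) (by norm_num) hk
      calc (1:ℝ) = 2^k * (1/2)^k := by
            rw [one_div, inv_pow, mul_inv_cancel₀ (by positivity)]
        _ ≤ 2^k * (1/2)^(mfun g) := by
            apply mul_le_mul_of_nonneg_left h1 (by positivity)
    have hsum : ∑ g : Fin m → Fin 2 × Fin 2, ((1:ℝ)/2)^(mfun g) = (7/2)^m := by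
      have hprod : ∀ g : Fin m → Fin 2 × Fin 2,
          ((1:ℝ)/2)^(mfun g) = ∏ j : Fin m, (if g j = tgt j then (1/2:ℝ) else 1) := by
        intro g
        rw [hmfun]
        rw [Finset.prod_ite, Finset.prod_const_one, mul_one, Finset.prod_const]
      simp_rw [hprod]
      rw [← Fintype.prod_sum (fun j (y : Fin 2 × Fin 2) => if y = tgt j then (1/2:ℝ) else 1)]
      have hw : ∀ j : Fin m,
          ∑ y : Fin 2 × Fin 2, (if y = tgt j then (1/2:ℝ) else 1) = 7/2 := by
        intro j
        have hrw : ∀ y : Fin 2 × Fin 2,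
            (if y = tgt j then (1/2:ℝ) else 1) = 1 + (if y = tgt j then (-1/2:ℝ) else 0) := by
          intro y; by_cases h : y = tgt j <;> simp [h] <;> norm_num
        rw [Finset.sum_congr rfl (fun y _ => hrw y), Finset.sum_add_distrib,
          Finset.sum_ite_eq' Finset.univ (tgt j) (fun _ => (-1/2:ℝ))]
        simp
        norm_num
      rw [Finset.prod_congr rfl (fun j _ => hw j), Finset.prod_const]
      simp
    calc (Gbad.card : ℝ) = ∑ _g ∈ Gbad, (1:ℝ) := by rw [Finset.sum_const, nsmul_eq_mul, mul_one]
      _ ≤ ∑ g ∈ Gbad, 2^k * ((1:ℝ)/2)^(mfun g) := Finset.sum_le_sum hterm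
      _ ≤ ∑ g : Fin m → Fin 2 × Fin 2, 2^k * ((1:ℝ)/2)^(mfun g) := by
          apply Finset.sum_le_sum_of_subset_of_nonneg (Finset.subset_univ _)
          intro g _ _; positivity
      _ = 2^k * ∑ g : Fin m → Fin 2 × Fin 2, ((1:ℝ)/2)^(mfun g) := by rw [Finset.mul_sum]
      _ = 2^k * (7/2)^m := by rw [hsum]
  calc ((Finset.univ.filter (fun π : Fin d → Fin 2 => mfun (pat π) ≤ k)).card : ℝ)
      ≤ ((Gbad.card * 2^(d - 2*m) : ℕ) : ℝ) := by exact_mod_cast hsplit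
    _ = (Gbad.card : ℝ) * 2^(d - 2*m) := by push_cast; ring
    _ ≤ 2^k * (7/2)^m * 2^(d - 2*m) := by
        apply mul_le_mul_of_nonneg_right hGbadcard (by positivity)

lemma numeric_bound {t k m : ℕ} (hk : 100 * k ≤ t) (hm : t ≤ 9 * m) :
    (2:ℝ)^k * (7/8)^m ≤ (2:ℝ)^(-((1/200 : ℝ) * (t:ℝ))) := by
  have h78 : (7/8:ℝ) ≤ (2:ℝ)^(-(1/6):ℝ) := by
    have hpow : ((2:ℝ)^(-(1/6):ℝ))^(6:ℕ) = 1/2 := by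
      rw [← Real.rpow_natCast ((2:ℝ)^(-(1/6):ℝ)) 6, ← Real.rpow_mul (by norm_num)]
      norm_num
    have h6 : ((7/8:ℝ))^(6:ℕ) ≤ ((2:ℝ)^(-(1/6):ℝ))^(6:ℕ) := by
      rw [hpow]; norm_num
    exact le_of_pow_le_pow_left₀ (by norm_num) (by positivity) h6
  have step1 : (2:ℝ)^k * (7/8)^m ≤ (2:ℝ)^k * ((2:ℝ)^(-(1/6):ℝ))^m :=
    mul_le_mul_of_nonneg_left (pow_le_pow_left₀ (by norm_num) h78 m) (by positivity)
  have step2 : (2:ℝ)^k * ((2:ℝ)^(-(1/6):ℝ))^m = (2:ℝ)^((k:ℝ) + (-(1/6))*(m:ℝ)) := by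
    rw [← Real.rpow_natCast (2:ℝ) k, ← Real.rpow_natCast ((2:ℝ)^(-(1/6):ℝ)) m,
      ← Real.rpow_mul (by norm_num), ← Real.rpow_add (by norm_num)]
  have hexp : (k:ℝ) + (-(1/6))*(m:ℝ) ≤ -((1/200 : ℝ) * (t:ℝ)) := by
    have hk' : (k:ℝ) * 100 ≤ (t:ℝ) := by exact_mod_cast Nat.mul_comm 100 k ▸ hk
    have hm' : (t:ℝ) ≤ 9 * (m:ℝ) := by exact_mod_cast hm
    linarith
  calc (2:ℝ)^k * (7/8)^m ≤ (2:ℝ)^((k:ℝ) + (-(1/6))*(m:ℝ)) := by rw [← step2]; exact step1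
    _ ≤ (2:ℝ)^(-((1/200 : ℝ) * (t:ℝ))) :=
        Real.rpow_le_rpow_of_exponent_le (by norm_num) hexp

/-- there is an absolute constant `c > 0` such that for all `d, t ≥ 1`
and every surjective colouring `χ : X → {1,…,t}`, a uniformly random `π ∈ {1,2}^d`
(with the convention `π(0) = 1`) satisfies `|C^d_π| ≤ t/100`, where
`C^d_π = {χ(x^(i)_{π(i−1),π(i)}) : i ∈ {1,…,d}}`, with probability at most `2^(−c·t)`
(stated by counting: the number of bad `π` is at most `2^(−c·t) · 2^d`). -/
theorem stmt_13 :
    ∃ c : ℝ, 0 < c ∧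
      ∀ (d t : ℕ), 1 ≤ d → 1 ≤ t →
        ∀ χ : IMMVar d → Fin t, Function.Surjective χ →
          (Nat.card {π : Fin d → Fin 2 //
              ((Finset.univ.image fun i : Fin d => χ (i, prevOf π i, π i)).card : ℝ)
                ≤ (t : ℝ) / 100} : ℝ)
            ≤ (2 : ℝ) ^ (-(c * t)) * (2 : ℝ) ^ d := by
  refine ⟨1/200, by norm_num, ?_⟩
  intro d t hd ht χ hχ
  classical
  have hdpos : Nonempty (Fin d) := ⟨⟨0, hd⟩⟩
  set P : (Fin d → Fin 2) → Prop := fun π =>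
    ((Finset.univ.image fun i : Fin d => χ (i, prevOf π i, π i)).card : ℝ) ≤ (t : ℝ) / 100
    with hP
  have hcardeq : (Nat.card {π : Fin d → Fin 2 // P π} : ℕ) = (Finset.univ.filter P).card := by
    rw [Nat.card_eq_fintype_card, Fintype.card_subtype]
  rw [show {π : Fin d → Fin 2 //
      ((Finset.univ.image fun i : Fin d => χ (i, prevOf π i, π i)).card : ℝ)
        ≤ (t : ℝ) / 100} = {π : Fin d → Fin 2 // P π} from rfl, hcardeq]
  by_cases htt : t < 100
  · -- small t : the bad set is empty
    have hempty : Finset.univ.filter P = ∅ := by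
      rw [Finset.filter_eq_empty_iff]
      intro π _
      rw [hP]
      simp only [not_le]
      have hpos : 1 ≤ (Finset.univ.image fun i : Fin d => χ (i, prevOf π i, π i)).card := by
        rw [Nat.one_le_iff_ne_zero, ← Nat.pos_iff_ne_zero, Finset.card_pos]
        exact (Finset.univ_nonempty).image _
      have h1 : ((t:ℝ))/100 < 1 := by
        have : (t:ℝ) < 100 := by exact_mod_cast htt
        linarith
      have h2 : (1:ℝ) ≤ ((Finset.univ.image fun i : Fin d => χ (i, prevOf π i, π i)).card : ℝ) := by
        exact_mod_cast hpos
      linarith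
    rw [hempty]
    simp only [Finset.card_empty, Nat.cast_zero]
    positivity
  · push_neg at htt
    obtain ⟨m, A, B, U, V, col, hcolinj, hχcol, hAB1, hABinj, h9m⟩ :=
      exists_reps htt χ hχ
    set k : ℕ := t / 100 with hk
    have hk100 : 100 * k ≤ t := Nat.mul_div_le t 100 |>.trans_eq' (by rw [hk, Nat.mul_comm])
    have h2m : 2 * m ≤ d := by
      have := Fintype.card_le_of_injective _ hABinj
      simpa [two_mul] using this
    -- bad set is contained in the low-hits set
    have hsub : Finset.univ.filter P ⊆ Finset.univ.filter (fun π : Fin d → Fin 2 =>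
        (Finset.univ.filter (fun j => π (A j) = U j ∧ π (B j) = V j)).card ≤ k) := by
      intro π hπ
      simp only [Finset.mem_filter, Finset.mem_univ, true_and] at hπ ⊢
      -- hits ≤ number of colours on the path
      have hprev : ∀ j : Fin m, prevOf π (B j) = π (A j) := by
        intro j
        have h1 := hAB1 j
        rw [prevOf, dif_neg (by omega)]
        congr 1
        apply Fin.ext
        simp only
        omega
      have hH : (Finset.univ.filter (fun j => π (A j) = U j ∧ π (B j) = V j)).card
          ≤ (Finset.univ.image fun i : Fin d => χ (i, prevOf π i, π i)).card := by
        have hval : ∀ j ∈ Finset.univ.filter (fun j => π (A j) = U j ∧ π (B j) = V j),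
            χ (B j, prevOf π (B j), π (B j)) = col j := by
          intro j hj
          obtain ⟨hjU, hjV⟩ := (Finset.mem_filter.mp hj).2
          rw [hprev j, hjU, hjV, hχcol j]
        apply Finset.card_le_card_of_injOn (fun j => χ (B j, prevOf π (B j), π (B j)))
        · intro j _
          exact Finset.mem_image.mpr ⟨B j, Finset.mem_univ _, rfl⟩
        · intro j hj j' hj' hjj
          have : col j = col j' := by
            rw [← hval j hj, ← hval j' hj']
            exact hjj
          exact hcolinj this
      have hcardk : (Finset.univ.image fun i : Fin d => χ (i, prevOf π i, π i)).card ≤ k := by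
        rw [hk, Nat.le_div_iff_mul_le (by norm_num)]
        have : ((Finset.univ.image fun i : Fin d => χ (i, prevOf π i, π i)).card : ℝ) * 100
            ≤ (t:ℝ) := by
          simp only [hP] at hπ
          linarith
        exact_mod_cast this
      exact hH.trans hcardk
    have hmain : ((Finset.univ.filter P).card : ℝ) ≤ 2^k * (7/2)^m * 2^(d - 2*m) := by
      refine le_trans ?_ (count_bad A B U V hABinj)
      exact_mod_cast Finset.card_le_card hsub
    have hpowsplit : (2:ℝ)^k * (7/2)^m * 2^(d - 2*m) = 2^k * (7/8)^m * 2^d := by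
      have h1 : (2:ℝ)^(d - 2*m) = 2^d / 4^m := by
        rw [pow_sub₀ (2:ℝ) (by norm_num) h2m, pow_mul]
        norm_num
        ring
      have h2 : (7/8:ℝ)^m = (7/2)^m / 4^m := by
        rw [← div_pow]
        norm_num
      rw [h1, h2]
      have h4 : (4:ℝ)^m ≠ 0 := by positivity
      field_simp
    calc ((Finset.univ.filter P).card : ℝ)
        ≤ 2^k * (7/2)^m * 2^(d - 2*m) := hmain
      _ = 2^k * (7/8)^m * 2^d := hpowsplit
      _ ≤ (2:ℝ)^(-((1/200 : ℝ) * (t:ℝ))) * 2^d := by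
          apply mul_le_mul_of_nonneg_right (numeric_bound hk100 h9m) (by positivity)
end

section
/- There is an absolute constant c > 0 such that for all integers d, r ≥ 1 and every subset U ⊆ X with |U| ≥ 400r the following holds. With the convention π(0) = 1, choose (π,a) uniformly at random from {1,2}^d × {0,1}^d. Then Pr[ |{i ∈ {1,…,d} : a_i = 1 and x^{(i)}_{π(i−1),π(i)} ∈ U}| ≤ 4r ] ≤ 2^{−c·r}. -/
open MvPolynomial

/-!
Weighting every pair by `2^(4r - N)`, where `N` counts the hits `a_i = 1`,
`x^(i)_{π(i-1),π(i)} ∈ U`, bounds the count by `2^(4r) ∑_{π,a} 2^(-N)`. Summing over `a`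
first leaves `2^d ∑_π ∏_i w_i(π(i-1), π(i))` with `w_i(u,v) = 3/4` on variables of `U` and `1`
elsewhere, i.e. `2^d` times a product of `2 × 2` transfer matrices applied to the all-ones vector.
Since all entries lie in `[3/4, 1]`, every partial product vector is balanced (each coordinate at
most twice the other), so each of the at least `|U|/4 ≥ 100r` layers meeting `U` multiplies the
total mass by at most `23/12` instead of `2`. As `2^5 (23/24)^100 < 1/2`, the bound holds with
`c = 1`.
-/

open Finset Matrix

lemma prevOf_eq_cons {d : ℕ} (π : Fin d → Fin 2) (i : Fin d) :
    prevOf π i = (Fin.cons 0 π : Fin (d + 1) → Fin 2) i.castSucc := by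
  unfold prevOf
  split_ifs with h
  · rw [show i.castSucc = 0 from Fin.ext h, Fin.cons_zero]
  · have hi : i.castSucc = Fin.succ ⟨i - 1, by omega⟩ :=
      Fin.ext (by simp only [Fin.val_castSucc, Fin.val_succ]; omega)
    rw [hi, Fin.cons_succ]

section PathSum

variable {σ R : Type*} [Fintype σ] [CommSemiring R]

/-- The weight of all paths `s, π 0, …, π (n-1)`, i.e. `(M 0 * ⋯ * M (n-1)) *ᵥ 1` at `s`. -/
def pathSum {n : ℕ} (M : Fin n → Matrix σ σ R) (s : σ) : R :=
  ∑ π : Fin n → σ, ∏ i, M i ((Fin.cons s π : Fin (n + 1) → σ) i.castSucc) (π i)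

lemma pathSum_zero (M : Fin 0 → Matrix σ σ R) : pathSum M = 1 := by
  ext s
  simp [pathSum]

lemma pathSum_succ {n : ℕ} (M : Fin (n + 1) → Matrix σ σ R) :
    pathSum M = M 0 *ᵥ pathSum (fun i => M i.succ) := by
  ext s
  rw [pathSum, ← (Fin.consEquiv fun _ => σ).sum_comp, Fintype.sum_prod_type]
  simp [mulVec, dotProduct, pathSum, Fin.prod_univ_succ, mul_sum, Fin.consEquiv]

lemma pathSum_nonneg {n : ℕ} {M : Fin n → Matrix σ σ ℝ} (hM : ∀ i u v, 0 ≤ M i u v)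
    (s : σ) :
    0 ≤ pathSum M s :=
  sum_nonneg fun _ _ => prod_nonneg fun i _ => hM i _ _

end PathSum

section Transfer

variable {σ : Type*} [Fintype σ] {M : Matrix σ σ ℝ} {T : σ → ℝ}

lemma mulVec_apply_le_sum (hM : ∀ u v, M u v ≤ 1) (hT : ∀ x, 0 ≤ T x) (s : σ) :
    (M *ᵥ T) s ≤ ∑ x, T x :=
  sum_le_sum fun x _ => mul_le_of_le_one_left (hT x) (hM s x)

lemma mul_sum_le_mulVec_apply {c : ℝ} (hM : ∀ u v, c ≤ M u v) (hT : ∀ x, 0 ≤ T x)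
    (s : σ) :
    c * ∑ x, T x ≤ (M *ᵥ T) s := by
  rw [mul_sum]
  exact sum_le_sum fun x _ => mul_le_mul_of_nonneg_right (hM s x) (hT x)

lemma sum_mulVec_eq (M : Matrix σ σ ℝ) (T : σ → ℝ) :
    ∑ s, (M *ᵥ T) s = ∑ x, (∑ s, M s x) * T x := by
  simp only [mulVec, dotProduct, sum_mul]
  exact sum_comm

end Transfer

def IsBalanced (T : Fin 2 → ℝ) : Prop := ∀ x y, T x ≤ 2 * T y

namespace IsBalanced

variable {T : Fin 2 → ℝ}

lemma nonneg (hT : IsBalanced T) (x : Fin 2) : 0 ≤ T x := by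
  linarith [hT x x]

lemma sum_le_three_mul (hT : IsBalanced T) (x : Fin 2) : ∑ y, T y ≤ 3 * T x := by
  rw [Fin.sum_univ_two]
  match x with
  | 0 => linarith [hT 1 0]
  | 1 => linarith [hT 0 1]

end IsBalanced

section TwoStates

variable {M : Matrix (Fin 2) (Fin 2) ℝ} {T : Fin 2 → ℝ}

lemma isBalanced_mulVec (hM : ∀ u v, M u v ∈ Set.Icc (3 / 4 : ℝ) 1) (hT : ∀ x, 0 ≤ T x) :
    IsBalanced (M *ᵥ T) := by
  intro s t
  have hsum : 0 ≤ ∑ x, T x := sum_nonneg fun x _ => hT x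
  linarith [mulVec_apply_le_sum (fun u v => (hM u v).2) hT s,
    mul_sum_le_mulVec_apply (fun u v => (hM u v).1) hT t]

lemma sum_mulVec_le (hM : ∀ u v, M u v ≤ 1) (hT : ∀ x, 0 ≤ T x) :
    ∑ s, (M *ᵥ T) s ≤ 2 * ∑ x, T x := by
  simpa [Fin.sum_univ_two, two_mul] using
    add_le_add (mulVec_apply_le_sum hM hT 0) (mulVec_apply_le_sum hM hT 1)

lemma sum_mulVec_le_of_le (hM : ∀ u v, M u v ≤ 1) (hT : IsBalanced T) {u v : Fin 2}
    (huv : M u v ≤ 3 / 4) : ∑ s, (M *ᵥ T) s ≤ 23 / 12 * ∑ x, T x := by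
  have hcol : ∀ x, ∑ s, M s x ≤ 2 - if x = v then 1 / 4 else 0 := by
    intro x
    rw [Fin.sum_univ_two]
    split_ifs with hx
    · subst hx
      match u, huv with
      | 0, huv => linarith [hM 1 x]
      | 1, huv => linarith [hM 0 x]
    · linarith [hM 0 x, hM 1 x]
  calc ∑ s, (M *ᵥ T) s = ∑ x, (∑ s, M s x) * T x := sum_mulVec_eq M T
    _ ≤ ∑ x, (2 - if x = v then 1 / 4 else 0) * T x :=
        sum_le_sum fun x _ => mul_le_mul_of_nonneg_right (hcol x) (hT.nonneg x)
    _ = 2 * ∑ x, T x - T v / 4 := by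
        simp [sub_mul, sum_sub_distrib, ite_mul, ← mul_sum, div_eq_inv_mul]
    _ ≤ 23 / 12 * ∑ x, T x := by linarith [hT.sum_le_three_mul v]

lemma isBalanced_pathSum {n : ℕ} {M : Fin n → Matrix (Fin 2) (Fin 2) ℝ}
    (hM : ∀ i u v, M i u v ∈ Set.Icc (3 / 4 : ℝ) 1) : IsBalanced (pathSum M) := by
  cases n with
  | zero => simp [pathSum_zero, IsBalanced]
  | succ n =>
    rw [pathSum_succ]
    exact isBalanced_mulVec (hM 0)
      (pathSum_nonneg fun i u v => le_trans (by norm_num) (hM i.succ u v).1)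

lemma sum_pathSum_le {n : ℕ} (M : Fin n → Matrix (Fin 2) (Fin 2) ℝ)
    (hM : ∀ i u v, M i u v ∈ Set.Icc (3 / 4 : ℝ) 1) (S : Finset (Fin n))
    (hS : ∀ i ∈ S, ∃ u v, M i u v ≤ 3 / 4) :
    ∑ s, pathSum M s ≤ 2 ^ (n + 1) * (23 / 24) ^ #S := by
  induction n with
  | zero => simp [pathSum_zero, Subsingleton.elim S ∅]
  | succ n ih =>
    have hM' : ∀ i u v, M (Fin.succ i) u v ∈ Set.Icc (3 / 4 : ℝ) 1 := fun i => hM i.succ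
    have htail := ih _ hM' {i | i.succ ∈ S} fun i hi => hS _ (mem_filter.1 hi).2
    have hbal := isBalanced_pathSum hM'
    have hcard : #S = (if 0 ∈ S then 1 else 0) + #{i : Fin n | i.succ ∈ S} := by
      rw [← Fin.card_filter_univ_succ', filter_univ_mem]
    rw [pathSum_succ, hcard]
    split_ifs with h0
    · obtain ⟨u, v, huv⟩ := hS 0 h0
      calc _ ≤ 23 / 12 * ∑ s, pathSum (fun i => M i.succ) s :=
            sum_mulVec_le_of_le (fun u v => (hM 0 u v).2) hbal huv
        _ ≤ 23 / 12 * (2 ^ (n + 1) * (23 / 24) ^ #{i : Fin n | i.succ ∈ S}) := by gcongr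
        _ = _ := by ring
    · calc _ ≤ 2 * ∑ s, pathSum (fun i => M i.succ) s :=
            sum_mulVec_le (fun u v => (hM 0 u v).2) hbal.nonneg
        _ ≤ _ := by rw [zero_add, pow_succ _ (n + 1)]; linarith

end TwoStates

lemma card_filter_mul_pow_le_sum {α : Type*} [Fintype α] (f : α → ℕ) (k : ℕ) {q : ℝ}
    (hq₀ : 0 ≤ q) (hq₁ : q ≤ 1) : (#{x | f x ≤ k} : ℝ) * q ^ k ≤ ∑ x, q ^ f x := by
  rw [← nsmul_eq_mul]
  calc #{x | f x ≤ k} • q ^ k ≤ ∑ x ∈ {x | f x ≤ k}, q ^ f x :=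
        card_nsmul_le_sum _ _ _ fun x hx => pow_le_pow_of_le_one hq₀ hq₁ (mem_filter.1 hx).2
    _ ≤ ∑ x, q ^ f x :=
        sum_le_sum_of_subset_of_nonneg (subset_univ _) fun x _ _ => pow_nonneg hq₀ _

lemma sum_half_pow_card_filter {ι : Type*} [Fintype ι] [DecidableEq ι] (P : ι → Prop)
    [DecidablePred P] :
    ∑ a : ι → Bool, (1 / 2 : ℝ) ^ #{i | a i = true ∧ P i}
      = 2 ^ Fintype.card ι * ∏ i, if P i then 3 / 4 else 1 := by
  have hfactor : ∀ a : ι → Bool, (1 / 2 : ℝ) ^ #{i | a i = true ∧ P i}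
      = ∏ i, if a i = true ∧ P i then 1 / 2 else 1 := fun a => by
    rw [← prod_const, prod_filter]
  have hcoord : ∀ i, (∑ b : Bool, if b = true ∧ P i then (1 / 2 : ℝ) else 1)
      = 2 * if P i then 3 / 4 else 1 := fun i => by
    by_cases h : P i <;> simp [h]
    norm_num
  simp_rw [hfactor]
  rw [← Fintype.prod_sum fun i (b : Bool) => if b = true ∧ P i then (1 / 2 : ℝ) else 1]
  simp_rw [hcoord, prod_mul_distrib, prod_const, card_univ]

noncomputable def layerWeight {d : ℕ} (U : Finset (IMMVar d)) (i : Fin d) :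
    Matrix (Fin 2) (Fin 2) ℝ :=
  of fun u v => if (i, u, v) ∈ U then 3 / 4 else 1

lemma layerWeight_mem_Icc {d : ℕ} (U : Finset (IMMVar d)) (i : Fin d) (u v : Fin 2) :
    layerWeight U i u v ∈ Set.Icc (3 / 4 : ℝ) 1 := by
  simp only [layerWeight, of_apply]
  split_ifs <;> norm_num

lemma card_le_four_mul_card_image_fst {d : ℕ} (U : Finset (IMMVar d)) :
    #U ≤ 4 * #(U.image Prod.fst) := by
  have hsub : U ⊆ U.image Prod.fst ×ˢ univ := fun x hx =>
    mem_product.2 ⟨mem_image_of_mem _ hx, mem_univ _⟩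
  simpa [card_product, mul_comm] using card_le_card hsub

lemma exists_layerWeight_le_of_mem_image_fst {d : ℕ} {U : Finset (IMMVar d)} {i : Fin d}
    (hi : i ∈ U.image Prod.fst) : ∃ u v, layerWeight U i u v ≤ 3 / 4 := by
  obtain ⟨⟨_, u, v⟩, hx, rfl⟩ := mem_image.1 hi
  exact ⟨u, v, by simp [layerWeight, hx]⟩

lemma sum_half_pow_card_hits {d : ℕ} (U : Finset (IMMVar d)) :
    ∑ pa : (Fin d → Fin 2) × (Fin d → Bool),
        (1 / 2 : ℝ) ^ #{i | pa.2 i = true ∧ (i, prevOf pa.1 i, pa.1 i) ∈ U}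
      = 2 ^ d * pathSum (layerWeight U) 0 := by
  rw [Fintype.sum_prod_type, pathSum, mul_sum]
  refine sum_congr rfl fun π _ => ?_
  dsimp only
  rw [sum_half_pow_card_filter, Fintype.card_fin]
  simp [layerWeight, prevOf_eq_cons]

lemma pathSum_layerWeight_le {d r : ℕ} (U : Finset (IMMVar d)) (hU : 400 * r ≤ #U) :
    pathSum (layerWeight U) 0 ≤ 2 ^ (d + 1) * (23 / 24 : ℝ) ^ (100 * r) :=
  calc pathSum (layerWeight U) 0 ≤ ∑ s, pathSum (layerWeight U) s :=
        single_le_sum (fun s _ => (isBalanced_pathSum (layerWeight_mem_Icc U)).nonneg s)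
          (mem_univ 0)
    _ ≤ _ := sum_pathSum_le _ (layerWeight_mem_Icc U) _
        fun _ => exists_layerWeight_le_of_mem_image_fst
    _ ≤ _ := by
        have := card_le_four_mul_card_image_fst U
        gcongr 2 ^ (d + 1) * ?_
        exact pow_le_pow_of_le_one (by norm_num) (by norm_num) (by omega)

/-- there is an absolute constant `c > 0` such that for all `d, r ≥ 1`
and every `U ⊆ X` with `|U| ≥ 400r`, a uniformly random
`(π,a) ∈ {1,2}^d × {0,1}^d` (with `π(0) = 1`) satisfies
`|{i : a_i = 1 and x^(i)_{π(i−1),π(i)} ∈ U}| ≤ 4r` with probability at most `2^(−c·r)`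
(stated by counting: the number of bad pairs is at most `2^(−c·r) · 2^d · 2^d`). -/
theorem stmt_14 :
    ∃ c : ℝ, 0 < c ∧
      ∀ (d r : ℕ), 1 ≤ d → 1 ≤ r →
        ∀ U : Finset (IMMVar d), 400 * r ≤ U.card →
          (Nat.card {pa : (Fin d → Fin 2) × (Fin d → Bool) //
              (Finset.univ.filter fun i : Fin d =>
                pa.2 i = true ∧ (i, prevOf pa.1 i, pa.1 i) ∈ U).card ≤ 4 * r} : ℝ)
            ≤ (2 : ℝ) ^ (-(c * r)) * ((2 : ℝ) ^ d * (2 : ℝ) ^ d) := by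
  refine ⟨1, one_pos, fun d r _ hr U hU => ?_⟩
  have hcount := card_filter_mul_pow_le_sum
    (fun pa : (Fin d → Fin 2) × (Fin d → Bool) =>
      #{i | pa.2 i = true ∧ (i, prevOf pa.1 i, pa.1 i) ∈ U}) (4 * r)
    (q := 1 / 2) (by norm_num) (by norm_num)
  rw [sum_half_pow_card_hits] at hcount
  have hdecay : 2 * (23 / 24 : ℝ) ^ (100 * r) ≤ (1 / 2) ^ (4 * r) * (1 / 2) ^ r :=
    calc 2 * (23 / 24 : ℝ) ^ (100 * r) ≤ 2 * ((1 / 2) ^ r * (1 / 32) ^ r) := by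
          rw [pow_mul, ← mul_pow]
          gcongr
          norm_num
      _ ≤ 2 * (1 / 2) * (1 / 32) ^ r := by
          rw [← mul_assoc]
          gcongr
          exact pow_le_of_le_one (by norm_num) (by norm_num) (by omega)
      _ = (1 / 2) ^ (4 * r) * (1 / 2) ^ r := by
          rw [← pow_add, show 4 * r + r = 5 * r by ring, pow_mul]
          norm_num
  rw [Nat.card_eq_fintype_card, Fintype.card_subtype, one_mul, Real.rpow_neg zero_le_two,
    Real.rpow_natCast, ← inv_pow, ← one_div]
  refine le_of_mul_le_mul_right (hcount.trans ?_) (by positivity : (0 : ℝ) < (1 / 2) ^ (4 * r))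
  calc 2 ^ d * pathSum (layerWeight U) 0
        ≤ 2 ^ d * (2 ^ (d + 1) * (23 / 24 : ℝ) ^ (100 * r)) := by
        gcongr
        exact pathSum_layerWeight_le U hU
    _ = 2 ^ d * 2 ^ d * (2 * (23 / 24 : ℝ) ^ (100 * r)) := by ring
    _ ≤ 2 ^ d * 2 ^ d * ((1 / 2) ^ (4 * r) * (1 / 2) ^ r) :=
        mul_le_mul_of_nonneg_left hdecay (by positivity)
    _ = _ := by ring
end

section
/- Let F be a field, Y and Z finite disjoint variable sets, r ≥ 1 an integer, and W_1,…,W_r pairwise disjoint subsets of Y ∪ Z. For each i ∈ {1,…,r} let L_i ∈ F[W_i] be a polynomial of total degree at most 1, and let f = L_1 ⋯ L_r, which is a multilinear polynomial in F[Y ∪ Z]. Then rank(M_{(Y,Z)}(f)) ≤ 2^r. -/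
open MvPolynomial

theorem Finsupp.card_support_le_degree {σ : Type*} (m : σ →₀ ℕ) : m.support.card ≤ m.degree := by
  rw [Finset.card_eq_sum_ones, degree_apply]
  exact Finset.sum_le_sum fun i hi => Nat.one_le_iff_ne_zero.2 (mem_support_iff.1 hi)

theorem Finsupp.support_subset_or_subset_compl_of_degree_le_one {σ : Type*} {m : σ →₀ ℕ}
    (hm : m.degree ≤ 1) (s : Set σ) : ↑m.support ⊆ s ∨ ↑m.support ⊆ sᶜ := by
  by_cases hs : ↑m.support ⊆ s
  · exact Or.inl hs
  · obtain ⟨j, hj, hjs⟩ := Set.not_subset.1 hs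
    refine Or.inr fun i hi his => hjs ?_
    rwa [Finset.card_le_one.1 ((card_support_le_degree m).trans hm) j hj i hi]

theorem Finsupp.support_sum_single_subset_range {α σ : Type*} (S : Finset α) (f : α → σ) :
    ↑(S.sum fun a => single (f a) 1).support ⊆ Set.range f := by
  classical
  intro v hv
  obtain ⟨a, -, ha⟩ := Finset.mem_biUnion.1 (support_finsetSum hv)
  exact ⟨a, (Finset.mem_singleton.1 (support_single_subset ha)).symm⟩

namespace MvPolynomial

variable {R σ : Type*} [CommSemiring R] {s t : Set σ}

theorem mem_supported_iff_forall_support_subset {p : MvPolynomial σ R} :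
    p ∈ supported R s ↔ ∀ m ∈ p.support, ↑m.support ⊆ s := by
  simp only [mem_supported, Set.subset_def, Finset.mem_coe, mem_vars_iff_mem_support]
  exact ⟨fun h m hm i hi => h i ⟨m, hm, hi⟩, fun h i ⟨m, hm, hi⟩ => h m hm i hi⟩

theorem monomial_mem_supported {m : σ →₀ ℕ} (hm : ↑m.support ⊆ s) (c : R) :
    monomial m c ∈ supported R s :=
  mem_supported_iff_forall_support_subset.2 fun _ hm' => by
    rwa [Finset.mem_singleton.1 (support_monomial_subset hm')]

theorem exists_eq_add_of_totalDegree_le_one {p : MvPolynomial σ R} (hp : p.totalDegree ≤ 1)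
    (s : Set σ) : ∃ g ∈ supported R s, ∃ h ∈ supported R sᶜ, p = g + h := by
  classical
  refine ⟨∑ m ∈ p.support.filter (fun m => ↑m.support ⊆ s), monomial m (coeff m p),
    Subalgebra.sum_mem _ fun m hm => monomial_mem_supported (Finset.mem_filter.1 hm).2 _,
    ∑ m ∈ p.support.filter (fun m => ¬ ↑m.support ⊆ s), monomial m (coeff m p),
    Subalgebra.sum_mem _ fun m hm => ?_, by rw [Finset.sum_filter_add_sum_filter_not, ← as_sum]⟩
  obtain ⟨hmp, hms⟩ := Finset.mem_filter.1 hm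
  have hdeg : m.degree ≤ 1 := (le_totalDegree hmp).trans hp
  exact monomial_mem_supported
    ((Finsupp.support_subset_or_subset_compl_of_degree_le_one hdeg s).resolve_left hms) _

theorem coeff_add_mul_of_mem_supported (hst : Disjoint s t) {g h : MvPolynomial σ R}
    (hg : g ∈ supported R s) (hh : h ∈ supported R t) {a b : σ →₀ ℕ}
    (ha : ↑a.support ⊆ s) (hb : ↑b.support ⊆ t) :
    coeff (a + b) (g * h) = coeff a g * coeff b h := by
  classical
  rw [coeff_mul]
  refine Finset.sum_eq_single_of_mem (a, b) (Finset.HasAntidiagonal.mem_antidiagonal.2 rfl) ?_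
  rintro ⟨c, d⟩ hcd hne
  rw [Finset.HasAntidiagonal.mem_antidiagonal] at hcd
  by_contra hcoeff
  have hc := mem_supported_iff_forall_support_subset.1 hg c
    (mem_support_iff.2 (left_ne_zero_of_mul hcoeff))
  have hd := mem_supported_iff_forall_support_subset.1 hh d
    (mem_support_iff.2 (right_ne_zero_of_mul hcoeff))
  have not_mem_of_support_subset {e : σ →₀ ℕ} {u : Set σ} (he : ↑e.support ⊆ u) {i : σ}
      (hi : i ∉ u) : e i = 0 := Finsupp.notMem_support_iff.1 fun h => hi (he h)
  have hca : c = a := by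
    ext i
    have hi := DFunLike.congr_fun hcd i
    simp only [Finsupp.add_apply] at hi
    by_cases his : i ∈ s
    · have hit : i ∉ t := hst.notMem_of_mem_left his
      rw [not_mem_of_support_subset hd hit, not_mem_of_support_subset hb hit] at hi
      simpa using hi
    · rw [not_mem_of_support_subset hc his, not_mem_of_support_subset ha his]
  subst hca
  exact hne (Prod.ext rfl (add_left_cancel hcd))

end MvPolynomial

theorem Matrix.rank_add_le {K m n : Type*} [Field K] [Fintype m] [Fintype n]
    (A B : Matrix m n K) : (A + B).rank ≤ A.rank + B.rank := by
  rw [rank, rank, rank, mulVecLin_add]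
  exact (Submodule.finrank_mono (LinearMap.range_add_le _ _)).trans
    (Submodule.finrank_add_le_finrank_add_finrank _ _)

theorem Matrix.rank_sum_le {ι K m n : Type*} [Field K] [Fintype m] [Fintype n]
    (s : Finset ι) (A : ι → Matrix m n K) : (∑ i ∈ s, A i).rank ≤ ∑ i ∈ s, (A i).rank :=
  Finset.le_sum_of_subadditive (fun M : Matrix m n K => M.rank) rank_zero.le rank_add_le s A

section pdMatrix

variable {F : Type} {V W : Type} (Y : Finset V) (Z : Finset W)

theorem pdMatrix_sum [CommSemiring F] {ι : Type*} (s : Finset ι) (g : ι → MvPolynomial (V ⊕ W) F) :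
    pdMatrix F Y Z (∑ i ∈ s, g i) = ∑ i ∈ s, pdMatrix F Y Z (g i) := by
  ext S T
  simp only [pdMatrix, coeff_sum, Matrix.sum_apply]

theorem rank_pdMatrix_mul_le_one [Field F] {g h : MvPolynomial (V ⊕ W) F}
    (hg : g ∈ supported F (Set.range Sum.inl)) (hh : h ∈ supported F (Set.range Sum.inr)) :
    (pdMatrix F Y Z (g * h)).rank ≤ 1 := by
  have houter : pdMatrix F Y Z (g * h) = Matrix.vecMulVec
      (fun S => coeff (S.1.sum fun y => Finsupp.single (Sum.inl y) 1) g)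
      (fun T => coeff (T.1.sum fun z => Finsupp.single (Sum.inr z) 1) h) := by
    ext S T
    exact coeff_add_mul_of_mem_supported Set.isCompl_range_inl_range_inr.disjoint hg hh
      (Finsupp.support_sum_single_subset_range _ _) (Finsupp.support_sum_single_subset_range _ _)
  rw [houter]
  exact Matrix.rank_vecMulVec_le _ _

theorem rank_pdMatrix_prod_le [Field F] {ι : Type*} (s : Finset ι) (L : ι → MvPolynomial (V ⊕ W) F)
    (hL : ∀ i ∈ s, (L i).totalDegree ≤ 1) :
    (pdMatrix F Y Z (∏ i ∈ s, L i)).rank ≤ 2 ^ s.card := by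
  classical
  choose! g hg h hh hgh using fun i hi => exists_eq_add_of_totalDegree_le_one (hL i hi)
    (Set.range (Sum.inl : V → V ⊕ W))
  rw [Set.compl_range_inl] at hh
  calc (pdMatrix F Y Z (∏ i ∈ s, L i)).rank
      = (∑ A ∈ s.powerset, pdMatrix F Y Z ((∏ i ∈ A, g i) * ∏ i ∈ s \ A, h i)).rank := by
        rw [← pdMatrix_sum, ← Finset.prod_add, Finset.prod_congr rfl hgh]
    _ ≤ ∑ A ∈ s.powerset, (pdMatrix F Y Z ((∏ i ∈ A, g i) * ∏ i ∈ s \ A, h i)).rank :=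
        Matrix.rank_sum_le _ _
    _ ≤ ∑ _A ∈ s.powerset, 1 := Finset.sum_le_sum fun A hA =>
        rank_pdMatrix_mul_le_one Y Z
          (Subalgebra.prod_mem _ fun i hi => hg i (Finset.mem_powerset.1 hA hi))
          (Subalgebra.prod_mem _ fun i hi => hh i (Finset.mem_sdiff.1 hi).1)
    _ = 2 ^ s.card := by simp

end pdMatrix

theorem stmt_17_general (F : Type) [Field F] {V W : Type}
    (Y : Finset V) (Z : Finset W) (r : ℕ)
    (L : Fin r → MvPolynomial (V ⊕ W) F)
    (hLdeg : ∀ i, (L i).totalDegree ≤ 1) :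
    (pdMatrix F Y Z (∏ i, L i)).rank ≤ 2 ^ r := by
  simpa using rank_pdMatrix_prod_le Y Z Finset.univ L fun i _ => hLdeg i

/-- if `W_1,…,W_r` are pairwise disjoint subsets of `Y ∪ Z` and each
`L_i ∈ F[W_i]` has total degree at most `1`, then `f = L_1 ⋯ L_r` satisfies
`rank(M_{(Y,Z)}(f)) ≤ 2^r`. (The `Y`-side variables are the left summands of
`V ⊕ W`, the `Z`-side variables the right summands.) -/
theorem stmt_17 (F : Type) [Field F] {V W : Type} [DecidableEq V] [DecidableEq W]
    (Y : Finset V) (Z : Finset W) (r : ℕ) (hr : 1 ≤ r)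
    (Ws : Fin r → Finset (V ⊕ W))
    (hsub : ∀ i, ((Ws i : Finset (V ⊕ W)) : Set (V ⊕ W)) ⊆ (Sum.inl '' ↑Y) ∪ (Sum.inr '' ↑Z))
    (hdisj : ∀ i j, i ≠ j → Disjoint (Ws i) (Ws j))
    (L : Fin r → MvPolynomial (V ⊕ W) F)
    (hLsupp : ∀ i, L i ∈ MvPolynomial.supported F ↑(Ws i))
    (hLdeg : ∀ i, (L i).totalDegree ≤ 1) :
    (pdMatrix F Y Z (∏ i, L i)).rank ≤ 2 ^ r :=
  stmt_17_general F Y Z r L hLdeg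
end
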